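/- arXiv:math/0008116 — 3 statements merged into one kernel-verified Lean document; each statement's English description precedes it below -/
import Mathlib

section
/- If G/H is reductive with Ad(H)-invariant complement 𝔪, then λ(S(𝔪)) ∩ D_{𝔥,χ,mod} = λ(I(𝔪)), and λ(I(𝔪)) is contained in D_H(G) = { D ∈ U(𝔤) : Ad(h)D = D for all h ∈ H }. -/
/-!
STATEMENT 11: If G/H is reductive with Ad(H)-invariant complement 𝔪 of 𝔥
in 𝔤, then λ(S(𝔪)) ∩ D_{𝔥,χ,mod} = λ(I(𝔪)), and
λ(I(𝔪)) ⊆ D_H(G) = { D ∈ U(𝔤) : Ad(h)D = D for all h ∈ H }.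
Here I(𝔪) = {P ∈ S(𝔪) : Ad(h)P = P ∀h ∈ H},
D_{𝔥,χ,mod} = { D : Ad(h)D − D ∈ U(𝔤)·𝔥^χ ∀h ∈ H }; S(𝔤) is realized as
polynomials over a basis adapted to 𝔤 = 𝔪 ⊕ 𝔥 and λ is the symmetrization
map, characterized by λ(Yᵏ) = Yᵏ.
-/

open UniversalEnvelopingAlgebra MvPolynomial

variable {L : Type*} [LieRing L] [LieAlgebra ℂ L]

/-- The canonical degree-one embedding of the Lie algebra into its symmetric
algebra S(𝔤), realized as the polynomial algebra over a basis. -/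
noncomputable def toPoly {ι : Type*} (b : Module.Basis ι ℂ L) : L →ₗ[ℂ] MvPolynomial ι ℂ :=
  (Finsupp.linearCombination ℂ fun i => (MvPolynomial.X i : MvPolynomial ι ℂ)).comp
    b.repr.toLinearMap

/-- The algebra endomorphism of S(𝔤) induced by a linear endomorphism of 𝔤. -/
noncomputable def adS {ι : Type*} (b : Module.Basis ι ℂ L) (φ : L →ₗ[ℂ] L) :
    MvPolynomial ι ℂ →ₐ[ℂ] MvPolynomial ι ℂ :=
  MvPolynomial.aeval fun i => toPoly b (φ (b i))

attribute [local instance 100] LieRing.ofAssociativeRing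

/-- The extension of a Lie algebra endomorphism of 𝔤 to an algebra
endomorphism of U(𝔤). -/
noncomputable def adU (φ : L →ₗ⁅ℂ⁆ L) :
    UniversalEnvelopingAlgebra ℂ L →ₐ[ℂ] UniversalEnvelopingAlgebra ℂ L :=
  UniversalEnvelopingAlgebra.lift ℂ ((ι ℂ).comp φ)

/-- The left ideal U(𝔤)·𝔥^χ generated by the elements X + χ(X)·1, X ∈ 𝔥. -/
noncomputable def leftIdealHChi (𝔥 : LieSubalgebra ℂ L) (χ : L →ₗ[ℂ] ℂ) :
    Submodule ℂ (UniversalEnvelopingAlgebra ℂ L) :=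
  Submodule.span ℂ
    {w | ∃ (u : UniversalEnvelopingAlgebra ℂ L), ∃ X ∈ 𝔥,
      w = u * (ι ℂ X + algebraMap ℂ (UniversalEnvelopingAlgebra ℂ L) (χ X))}

/-- With the basis of 𝔤 adapted to a decomposition 𝔤 = 𝔪 ⊕ 𝔥 (the
`Sum.inl`-indexed vectors spanning 𝔪, the `Sum.inr`-indexed ones spanning 𝔥),
the algebra homomorphism σ : S(𝔤) → S(𝔪) ⊆ S(𝔤) induced by the projection
of 𝔤 onto 𝔪 along 𝔥. -/
noncomputable def sigmaS {ι₁ ι₂ : Type*} :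
    MvPolynomial (ι₁ ⊕ ι₂) ℂ →ₐ[ℂ] MvPolynomial (ι₁ ⊕ ι₂) ℂ :=
  MvPolynomial.aeval
    (Sum.elim (fun i => (MvPolynomial.X (Sum.inl i) : MvPolynomial (ι₁ ⊕ ι₂) ℂ))
      (fun _ => 0))

set_option linter.unusedSectionVars false
set_option linter.unusedVariables false

noncomputable section AuxSpan

variable {ι : Type*}

/-- linear forms -/
noncomputable def linF (ι : Type*) : (ι →₀ ℂ) →ₗ[ℂ] MvPolynomial ι ℂ :=
  Finsupp.linearCombination ℂ (fun i => (X i : MvPolynomial ι ℂ))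

lemma vdm_extract {W : Type*} [AddCommGroup W] [Module ℂ W] (M : Submodule ℂ W) :
    ∀ (n : ℕ) (g : ℕ → W),
      (∀ t : ℂ, t ≠ 0 → (∑ j ∈ Finset.range (n + 1), t ^ j • g j) ∈ M) →
      ∀ j ≤ n, g j ∈ M := by
  intro n
  induction n with
  | zero =>
    intro g h j hj
    interval_cases j
    simpa using h 1 one_ne_zero
  | succ n IH =>
    intro g h j hj
    have key : ∀ j ≤ n, g j ∈ M := by
      have h2 : ∀ t : ℂ, t ≠ 0 →
          (∑ j ∈ Finset.range (n + 1), t ^ j • (((2:ℂ) ^ j - 2 ^ (n+1)) • g j)) ∈ M := by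
        intro t ht
        have e1 := h (2 * t) (by simp [ht])
        have e2 := h t ht
        have := M.sub_mem e1 (M.smul_mem ((2:ℂ)^(n+1)) e2)
        have expand : (∑ j ∈ Finset.range (n + 2), (2*t) ^ j • g j)
            - (2:ℂ)^(n+1) • (∑ j ∈ Finset.range (n + 2), t ^ j • g j)
            = ∑ j ∈ Finset.range (n + 1), t ^ j • (((2:ℂ) ^ j - 2 ^ (n+1)) • g j) := by
          rw [Finset.smul_sum, ← Finset.sum_sub_distrib, Finset.sum_range_succ]
          have hlast : (2*t) ^ (n+1) • g (n+1) - (2:ℂ)^(n+1) • (t ^ (n+1) • g (n+1)) = 0 := by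
            rw [mul_pow, smul_smul]
            exact sub_self _
          rw [hlast, add_zero]
          exact Finset.sum_congr rfl (fun j _ => by
            rw [mul_pow, smul_smul, smul_smul, ← sub_smul]
            congr 1
            ring)
        rw [← expand]
        exact this
      have := IH (fun j => ((2:ℂ) ^ j - 2 ^ (n+1)) • g j) h2
      intro j hj
      have hne : ((2:ℂ) ^ j - 2 ^ (n+1)) ≠ 0 := by
        intro hc
        have : (2:ℂ) ^ j = 2 ^ (n+1) := by linear_combination hc
        have : ((2^j : ℕ) : ℂ) = ((2^(n+1) : ℕ) : ℂ) := by push_cast; exact this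
        have : (2:ℕ)^j = 2^(n+1) := Nat.cast_injective this
        have := Nat.pow_right_injective (le_refl 2) this
        omega
      have hgj := this j hj
      have : g j = ((2:ℂ) ^ j - 2 ^ (n+1))⁻¹ • (((2:ℂ) ^ j - 2 ^ (n+1)) • g j) := by
        rw [smul_smul, inv_mul_cancel₀ hne, one_smul]
      rw [this]
      exact M.smul_mem _ hgj
    rcases Nat.lt_or_ge j (n+1) with hlt | hge
    · exact key j (by omega)
    · have hj' : j = n + 1 := by omega
      subst hj'
      have h1 := h 1 one_ne_zero
      simp only [one_pow, one_smul] at h1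
      rw [Finset.sum_range_succ] at h1
      have : g (n+1) = (∑ j ∈ Finset.range (n + 1), g j + g (n+1))
          - ∑ j ∈ Finset.range (n + 1), g j := by abel
      rw [this]
      exact M.sub_mem h1 (Submodule.sum_mem M (fun j hj => key j (by
        simp only [Finset.mem_range] at hj; omega)))

end AuxSpan
section AuxSpan2

open MvPolynomial

variable {ι : Type*}

lemma linF_single (i : ι) (t : ℂ) : linF ι (Finsupp.single i t) = t • X i := by
  simp [linF]

lemma X_mul_pow_mem (i : ι) (c : ι →₀ ℂ) (k : ℕ) :
    (X i : MvPolynomial ι ℂ) * linF ι c ^ k ∈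
      Submodule.span ℂ {q : MvPolynomial ι ℂ | ∃ c', q = linF ι c' ^ (k + 1)} := by
  set M := Submodule.span ℂ {q : MvPolynomial ι ℂ | ∃ c', q = linF ι c' ^ (k + 1)} with hM
  have key := vdm_extract M (k + 1)
    (fun j => ((k+1).choose j : ℂ) • ((X i : MvPolynomial ι ℂ) ^ j * linF ι c ^ (k + 1 - j)))
    ?_ 1 (by omega)
  · have h1 : ((k+1).choose 1 : ℂ) = (k+1 : ℂ) := by norm_num
    simp only [h1, pow_one] at key
    have hne : ((k:ℂ)+1) ≠ 0 := by
      have : ((k+1 : ℕ) : ℂ) ≠ 0 := Nat.cast_ne_zero.mpr (Nat.succ_ne_zero k)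
      push_cast at this
      exact this
    have : (X i : MvPolynomial ι ℂ) * linF ι c ^ k
        = ((k:ℂ)+1)⁻¹ • (((k:ℂ)+1) • ((X i : MvPolynomial ι ℂ) * linF ι c ^ (k + 1 - 1))) := by
      rw [smul_smul, inv_mul_cancel₀ hne, one_smul]
      norm_num
    rw [this]
    exact M.smul_mem _ (by exact_mod_cast key)
  · intro t ht
    have hexp : (∑ j ∈ Finset.range (k + 1 + 1),
        t ^ j • (((k+1).choose j : ℂ) • ((X i : MvPolynomial ι ℂ) ^ j * linF ι c ^ (k + 1 - j))))
        = (t • (X i : MvPolynomial ι ℂ) + linF ι c) ^ (k+1) := by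
      rw [add_pow]
      exact Finset.sum_congr rfl (fun j hj => by
        simp only [smul_pow, Algebra.smul_def, map_mul, map_pow, map_natCast]
        ring)
    rw [hexp]
    apply Submodule.subset_span
    refine ⟨c + Finsupp.single i t, ?_⟩
    rw [map_add, linF_single]
    ring

lemma finsupp_sum_nat_eq_zero (α : ι →₀ ℕ) (h : (α.sum fun _ n => n) = 0) : α = 0 := by
  ext j
  by_contra hj
  have hjs : j ∈ α.support := Finsupp.mem_support_iff.mpr (by simpa using hj)
  have := Finset.sum_eq_zero_iff.mp h j hjs
  exact (Finsupp.mem_support_iff.mp hjs) this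

lemma monomial_mem_span_pow (α : ι →₀ ℕ) :
    (monomial α 1 : MvPolynomial ι ℂ) ∈ Submodule.span ℂ
      {q : MvPolynomial ι ℂ | ∃ c, q = linF ι c ^ (α.sum fun _ n => n)} := by
  set n := (α.sum fun _ n => n) with hn
  clear_value n
  induction n generalizing α with
  | zero =>
    have : α = 0 := finsupp_sum_nat_eq_zero α hn.symm
    subst this
    apply Submodule.subset_span
    exact ⟨0, by simp [monomial_zero', C_1]⟩
  | succ n IH =>
    have hne : α.support.Nonempty := by
      by_contra hc
      rw [Finset.not_nonempty_iff_eq_empty] at hc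
      have : α = 0 := Finsupp.support_eq_empty.mp hc
      subst this
      simp [Finsupp.sum_zero_index] at hn
    obtain ⟨i, hi⟩ := hne
    set β := α - Finsupp.single i 1 with hβ
    have hαβ : α = β + Finsupp.single i 1 := by
      ext j
      rcases eq_or_ne j i with rfl | hji
      · have : 1 ≤ α j := Finsupp.mem_support_iff.mp hi |> Nat.one_le_iff_ne_zero.mpr
        simp [hβ, Finsupp.tsub_apply]
        omega
      · simp [hβ, Finsupp.tsub_apply, Finsupp.single_apply, Ne.symm hji, hji]
    have hsum : (β.sum fun _ n => n) = n := by
      have : (α.sum fun _ n => n) = (β.sum fun _ n => n) + 1 := by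
        rw [hαβ, Finsupp.sum_add_index' (fun _ => rfl) (fun _ _ _ => rfl),
          Finsupp.sum_single_index rfl]
      omega
    have hmono : (monomial α 1 : MvPolynomial ι ℂ) = X i * monomial β 1 := by
      rw [X, monomial_mul, one_mul, hαβ, add_comm]
    rw [hmono]
    have IHβ := IH β hsum.symm
    -- multiplication by X i maps span into span
    have : ∀ z ∈ Submodule.span ℂ {q : MvPolynomial ι ℂ | ∃ c, q = linF ι c ^ n},
        (X i : MvPolynomial ι ℂ) * z ∈
          Submodule.span ℂ {q : MvPolynomial ι ℂ | ∃ c, q = linF ι c ^ (n+1)} := by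
      intro z hz
      induction hz using Submodule.span_induction with
      | mem q hq =>
        obtain ⟨c, rfl⟩ := hq
        exact X_mul_pow_mem i c n
      | zero => simp
      | add x y _ _ hx hy => rw [mul_add]; exact Submodule.add_mem _ hx hy
      | smul a x _ hx => rw [Algebra.mul_smul_comm]; exact Submodule.smul_mem _ a hx
    exact this _ IHβ

lemma span_linF_pow_eq_top :
    Submodule.span ℂ {q : MvPolynomial ι ℂ | ∃ c k, q = linF ι c ^ k} = ⊤ := by
  rw [eq_top_iff]
  rw [← (basisMonomials ι ℂ).span_eq]
  apply Submodule.span_le.mpr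
  rintro q ⟨α, rfl⟩
  rw [coe_basisMonomials]
  refine Submodule.span_mono ?_ (monomial_mem_span_pow α)
  rintro q ⟨c, rfl⟩
  exact ⟨c, _, rfl⟩

lemma mem_span_linF_pow_of_totalDegree_le (p : MvPolynomial ι ℂ) (n : ℕ)
    (h : p.totalDegree ≤ n) :
    p ∈ Submodule.span ℂ {q : MvPolynomial ι ℂ | ∃ c k, k ≤ n ∧ q = linF ι c ^ k} := by
  rw [MvPolynomial.as_sum p]
  apply Submodule.sum_mem
  intro α hα
  have : (monomial α (coeff α p) : MvPolynomial ι ℂ) = coeff α p • monomial α 1 := by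
    rw [smul_monomial, smul_eq_mul, mul_one]
  rw [this]
  apply Submodule.smul_mem
  refine Submodule.span_mono ?_ (monomial_mem_span_pow α)
  rintro q ⟨c, rfl⟩
  exact ⟨c, _, le_trans (MvPolynomial.le_totalDegree hα) h, rfl⟩

end AuxSpan2
section Rep

open UniversalEnvelopingAlgebra MvPolynomial

variable {L : Type*} [LieRing L] [LieAlgebra ℂ L]
variable {ι₁ ι₂ : Type*} [LinearOrder ι₁]

/-- degree of a monomial -/
def degM (α : ι₁ →₀ ℕ) : ℕ := α.sum fun _ n => n

variable (b : Module.Basis (ι₁ ⊕ ι₂) ℂ L) (χ : L →ₗ[ℂ] ℂ)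

/-- the linear polynomial given by the 𝔪-coordinates of an element of L -/
noncomputable def ppM : L →ₗ[ℂ] MvPolynomial ι₁ ℂ :=
  (Finsupp.linearCombination ℂ
    (Sum.elim (fun i => (X i : MvPolynomial ι₁ ℂ)) (fun _ => 0))).comp b.repr.toLinearMap

/-- χ of the 𝔥-coordinates of an element of L -/
noncomputable def ccM : L →ₗ[ℂ] ℂ :=
  (Finsupp.linearCombination ℂ
    (Sum.elim (fun _ => (0:ℂ)) (fun j => χ (b (Sum.inr j))))).comp b.repr.toLinearMap

@[simp] lemma ppM_basis_inl (i : ι₁) : ppM b (b (Sum.inl i)) = X i := by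
  simp [ppM]

@[simp] lemma ppM_basis_inr (j : ι₂) : ppM b (b (Sum.inr j)) = 0 := by
  simp [ppM]

@[simp] lemma ccM_basis_inl (i : ι₁) : ccM b χ (b (Sum.inl i)) = 0 := by
  simp [ccM]

@[simp] lemma ccM_basis_inr (j : ι₂) : ccM b χ (b (Sum.inr j)) = χ (b (Sum.inr j)) := by
  simp [ccM]

lemma totalDegree_ppM_le (Z : L) : (ppM b Z).totalDegree ≤ 1 := by
  rw [ppM]
  simp only [LinearMap.coe_comp, Function.comp_apply, LinearEquiv.coe_coe]
  rw [Finsupp.linearCombination_apply, Finsupp.sum]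
  refine le_trans (totalDegree_finset_sum _ _) ?_
  apply Finset.sup_le
  intro k _
  refine le_trans (totalDegree_smul_le _ _) ?_
  rcases k with i | j
  · simp [totalDegree_X]
  · simp

/-- recursion step -/
noncomputable def FMrec (Fprev : (ι₁ ⊕ ι₂) → (ι₁ →₀ ℕ) → MvPolynomial ι₁ ℂ)
    (k : ι₁ ⊕ ι₂) (α : ι₁ →₀ ℕ) : MvPolynomial ι₁ ℂ :=
  if h : α.support.Nonempty then
    ppM b (b k) * monomial α 1
      + (b.repr ⁅b k, b (Sum.inl (α.support.min' h))⁆).sum (fun j c => c • Fprev j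
          (α - Finsupp.single (α.support.min' h) 1))
      + (Fprev k (α - Finsupp.single (α.support.min' h) 1)
          - ppM b (b k) * monomial (α - Finsupp.single (α.support.min' h) 1) 1).support.sum
          (fun γ => (Fprev k (α - Finsupp.single (α.support.min' h) 1)
            - ppM b (b k) * monomial (α - Finsupp.single (α.support.min' h) 1) 1).coeff γ •
              Fprev (Sum.inl (α.support.min' h)) γ)
  else 0

open scoped Classical in
/-- one branch -/
noncomputable def FMbranch (Fprev : (ι₁ ⊕ ι₂) → (ι₁ →₀ ℕ) → MvPolynomial ι₁ ℂ)
    (k : ι₁ ⊕ ι₂) (α : ι₁ →₀ ℕ) : MvPolynomial ι₁ ℂ :=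
  match k with
  | Sum.inl k₁ =>
      if ∀ j ∈ α.support, k₁ ≤ j then X k₁ * monomial α 1
      else FMrec b Fprev (Sum.inl k₁) α
  | Sum.inr k₂ =>
      if α = 0 then (- χ (b (Sum.inr k₂))) • 1
      else FMrec b Fprev (Sum.inr k₂) α

/-- the action of basis vectors on monomials, with fuel -/
noncomputable def FM : ℕ → (ι₁ ⊕ ι₂) → (ι₁ →₀ ℕ) → MvPolynomial ι₁ ℂ
  | 0 => FMbranch b χ (fun _ _ => 0)
  | (n+1) => FMbranch b χ (FM n)

lemma FM_caseA (n : ℕ) (k₁ : ι₁) (α : ι₁ →₀ ℕ) (h : ∀ j ∈ α.support, k₁ ≤ j) :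
    FM b χ n (Sum.inl k₁) α = X k₁ * monomial α 1 := by
  cases n <;> rw [FM, FMbranch] <;> simp only [if_pos h]

lemma FM_zeroR (n : ℕ) (k₂ : ι₂) :
    FM b χ n (Sum.inr k₂) 0 = (- χ (b (Sum.inr k₂))) • 1 := by
  cases n <;> rw [FM, FMbranch] <;> simp

lemma FM_recL (n : ℕ) (k₁ : ι₁) (α : ι₁ →₀ ℕ) (h : ¬ ∀ j ∈ α.support, k₁ ≤ j) :
    FM b χ (n+1) (Sum.inl k₁) α = FMrec b (FM b χ n) (Sum.inl k₁) α := by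
  rw [FM, FMbranch]
  simp only [if_neg h]

lemma FM_recR (n : ℕ) (k₂ : ι₂) (α : ι₁ →₀ ℕ) (h : α ≠ 0) :
    FM b χ (n+1) (Sum.inr k₂) α = FMrec b (FM b χ n) (Sum.inr k₂) α := by
  rw [FM, FMbranch]
  simp only [if_neg h]

end Rep
section Rep2

open UniversalEnvelopingAlgebra MvPolynomial

variable {L : Type*} [LieRing L] [LieAlgebra ℂ L]
variable {ι₁ ι₂ : Type*} [LinearOrder ι₁]
variable (b : Module.Basis (ι₁ ⊕ ι₂) ℂ L) (χ : L →ₗ[ℂ] ℂ)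

lemma sub_single_add (α : ι₁ →₀ ℕ) (i : ι₁) (hi : i ∈ α.support) :
    (α - Finsupp.single i 1) + Finsupp.single i 1 = α := by
  have h1 : 1 ≤ α i := Nat.one_le_iff_ne_zero.mpr (Finsupp.mem_support_iff.mp hi)
  ext j
  rcases eq_or_ne j i with rfl | hji
  · simp [Finsupp.tsub_apply]
    omega
  · simp [Finsupp.tsub_apply, Finsupp.single_apply, Ne.symm hji]

lemma degM_sub_single (α : ι₁ →₀ ℕ) (i : ι₁) (hi : i ∈ α.support) :
    degM (α - Finsupp.single i 1) + 1 = degM α := by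
  conv_rhs => rw [← sub_single_add α i hi]
  rw [degM, degM, Finsupp.sum_add_index' (fun _ => rfl) (fun _ _ _ => rfl),
    Finsupp.sum_single_index rfl]

lemma support_sub_single (α : ι₁ →₀ ℕ) (i : ι₁) :
    (α - Finsupp.single i 1).support ⊆ α.support := by
  intro j hj
  rw [Finsupp.mem_support_iff] at hj ⊢
  intro h0
  apply hj
  rw [Finsupp.tsub_apply, h0]
  simp

lemma monomial_sub_single (α : ι₁ →₀ ℕ) (i : ι₁) (hi : i ∈ α.support) :
    (monomial α 1 : MvPolynomial ι₁ ℂ) = X i * monomial (α - Finsupp.single i 1) 1 := by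
  conv_lhs => rw [← sub_single_add α i hi]
  rw [X, monomial_mul, one_mul, add_comm]

lemma degM_le_of_mem_support (w : MvPolynomial ι₁ ℂ) (γ : ι₁ →₀ ℕ) (h : γ ∈ w.support) :
    degM γ ≤ w.totalDegree :=
  MvPolynomial.le_totalDegree h

lemma degM_eq_zero (α : ι₁ →₀ ℕ) (h : degM α = 0) : α = 0 :=
  finsupp_sum_nat_eq_zero α h

/-- B property packaged -/
def propB (n : ℕ) : Prop :=
  ∀ (k : ι₁ ⊕ ι₂) (α : ι₁ →₀ ℕ), degM α ≤ n →
    (FM b χ n k α - ppM b (b k) * monomial α 1).totalDegree ≤ degM α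

/-- S property packaged -/
def propS (n : ℕ) : Prop :=
  ∀ (k : ι₁ ⊕ ι₂) (α : ι₁ →₀ ℕ), degM α ≤ n → FM b χ (n+1) k α = FM b χ n k α

lemma FM_deg_le_of_B {n : ℕ} (hB : propB b χ n) (k : ι₁ ⊕ ι₂) (α : ι₁ →₀ ℕ)
    (h : degM α ≤ n) : (FM b χ n k α).totalDegree ≤ degM α + 1 := by
  have : FM b χ n k α = (FM b χ n k α - ppM b (b k) * monomial α 1)
      + ppM b (b k) * monomial α 1 := by ring
  rw [this]
  refine le_trans (totalDegree_add _ _) ?_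
  apply max_le
  · exact le_trans (hB k α h) (by omega)
  · refine le_trans (totalDegree_mul _ _) ?_
    have h2 : (monomial α (1:ℂ)).totalDegree ≤ degM α := by
      rw [totalDegree_monomial _ one_ne_zero]
      exact le_refl _
    have := totalDegree_ppM_le b (b k)
    omega

lemma FMrec_congr {n : ℕ} (F G : (ι₁ ⊕ ι₂) → (ι₁ →₀ ℕ) → MvPolynomial ι₁ ℂ)
    (k : ι₁ ⊕ ι₂) (α : ι₁ →₀ ℕ) (hα : α.support.Nonempty) (hdeg : degM α ≤ n + 1)
    (hFG : ∀ k' γ, degM γ ≤ n → F k' γ = G k' γ)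
    (hB : ∀ k' γ, degM γ ≤ n → (G k' γ - ppM b (b k') * monomial γ 1).totalDegree ≤ degM γ) :
    FMrec b F k α = FMrec b G k α := by
  rw [FMrec, FMrec, dif_pos hα, dif_pos hα]
  set i := α.support.min' hα with hi
  set β := α - Finsupp.single i 1 with hβ
  have hβdeg : degM β ≤ n := by
    have h2 := degM_sub_single α i (α.support.min'_mem hα)
    rw [← hβ] at h2
    omega
  congr 1
  · congr 1
    apply Finsupp.sum_congr
    intro j _
    rw [hFG j β hβdeg]
  · rw [hFG k β hβdeg]
    apply Finset.sum_congr rfl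
    intro γ hγ
    have hγdeg : degM γ ≤ n := by
      have h1 := degM_le_of_mem_support _ _ hγ
      have h2 := hB k β hβdeg
      omega
    rw [hFG (Sum.inl i) γ hγdeg]

lemma FM_SB : ∀ n : ℕ, propB b χ n ∧ propS b χ n := by
  intro n
  induction n with
  | zero =>
    constructor
    · intro k α h
      have : α = 0 := degM_eq_zero α (Nat.le_zero.mp h)
      subst this
      rcases k with k₁ | k₂
      · rw [FM_caseA b χ 0 k₁ 0 (by simp)]
        simp
      · rw [FM_zeroR b χ 0 k₂]
        simp only [ppM_basis_inr, zero_mul, sub_zero]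
        refine le_trans (totalDegree_smul_le _ _) ?_
        simp [totalDegree_one, degM]
    · intro k α h
      have : α = 0 := degM_eq_zero α (Nat.le_zero.mp h)
      subst this
      rcases k with k₁ | k₂
      · rw [FM_caseA b χ 1 k₁ 0 (by simp), FM_caseA b χ 0 k₁ 0 (by simp)]
      · rw [FM_zeroR b χ 1 k₂, FM_zeroR b χ 0 k₂]
  | succ n IH =>
    obtain ⟨IHB, IHS⟩ := IH
    have hS : propS b χ (n+1) := by
      intro k α h
      rcases k with k₁ | k₂
      · by_cases hA : ∀ j ∈ α.support, k₁ ≤ j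
        · rw [FM_caseA b χ (n+2) k₁ α hA, FM_caseA b χ (n+1) k₁ α hA]
        · have hne : α.support.Nonempty := by
            by_contra hc
            rw [Finset.not_nonempty_iff_eq_empty] at hc
            exact hA (fun j hj => by rw [hc] at hj; exact absurd hj (Finset.notMem_empty j))
          rw [FM_recL b χ (n+1) k₁ α hA, FM_recL b χ n k₁ α hA]
          exact FMrec_congr b _ _ _ α hne h IHS IHB
      · by_cases h0 : α = 0
        · subst h0; rw [FM_zeroR, FM_zeroR]
        · have hne : α.support.Nonempty := Finsupp.support_nonempty_iff.mpr h0
          rw [FM_recR b χ (n+1) k₂ α h0, FM_recR b χ n k₂ α h0]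
          exact FMrec_congr b _ _ _ α hne h IHS IHB
    refine ⟨?_, hS⟩
    intro k α h
    -- case analysis
    rcases Nat.lt_or_ge (degM α) 1 with h0 | h1
    · -- α = 0, same as base case
      have : α = 0 := degM_eq_zero α (by omega)
      subst this
      rcases k with k₁ | k₂
      · rw [FM_caseA b χ (n+1) k₁ 0 (by simp)]
        simp
      · rw [FM_zeroR b χ (n+1) k₂]
        simp only [ppM_basis_inr, zero_mul, sub_zero]
        refine le_trans (totalDegree_smul_le _ _) ?_
        simp [totalDegree_one, degM]
    · have hne : α.support.Nonempty := by
        by_contra hc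
        rw [Finset.not_nonempty_iff_eq_empty] at hc
        have : α = 0 := Finsupp.support_eq_empty.mp hc
        subst this
        simp [degM, Finsupp.sum_zero_index] at h1
      have hrec : ∀ (hx : FM b χ (n+1) k α = FMrec b (FM b χ n) k α), _ := fun hx => hx
      -- bound for the FMrec form
      have key : FM b χ (n+1) k α = FMrec b (FM b χ n) k α →
          (FM b χ (n+1) k α - ppM b (b k) * monomial α 1).totalDegree ≤ degM α := by
        intro heq
        rw [heq, FMrec, dif_pos hne]
        set i := α.support.min' hne with hi
        set β := α - Finsupp.single i 1 with hβ
        have hdegα : degM β + 1 = degM α := by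
          have h2 := degM_sub_single α i (α.support.min'_mem hne)
          rw [← hβ] at h2
          exact h2
        have hβdeg : degM β ≤ n := by omega
        have hterm2 : ((b.repr ⁅b k, b (Sum.inl i)⁆).sum
            (fun j c => c • FM b χ n j β)).totalDegree ≤ degM α := by
          rw [Finsupp.sum]
          refine le_trans (totalDegree_finset_sum _ _) ?_
          apply Finset.sup_le
          intro j _
          refine le_trans (totalDegree_smul_le _ _) ?_
          have := FM_deg_le_of_B b χ IHB j β hβdeg
          omega
        have hterm3 : ((FM b χ n k β - ppM b (b k) * monomial β 1).support.sum
            (fun γ => (FM b χ n k β - ppM b (b k) * monomial β 1).coeff γ •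
              FM b χ n (Sum.inl i) γ)).totalDegree ≤ degM α := by
          refine le_trans (totalDegree_finset_sum _ _) ?_
          apply Finset.sup_le
          intro γ hγ
          refine le_trans (totalDegree_smul_le _ _) ?_
          have hγdeg : degM γ ≤ n := by
            have hg1 := degM_le_of_mem_support _ _ hγ
            have hg2 := IHB k β hβdeg
            omega
          have := FM_deg_le_of_B b χ IHB (Sum.inl i) γ hγdeg
          have hg1 := degM_le_of_mem_support _ _ hγ
          have hg2 := IHB k β hβdeg
          omega
        have hsimp : ppM b (b k) * monomial α 1
            + (b.repr ⁅b k, b (Sum.inl i)⁆).sum (fun j c => c • FM b χ n j β)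
            + (FM b χ n k β - ppM b (b k) * monomial β 1).support.sum
              (fun γ => (FM b χ n k β - ppM b (b k) * monomial β 1).coeff γ •
                FM b χ n (Sum.inl i) γ)
            - ppM b (b k) * monomial α 1
            = (b.repr ⁅b k, b (Sum.inl i)⁆).sum (fun j c => c • FM b χ n j β)
            + (FM b χ n k β - ppM b (b k) * monomial β 1).support.sum
              (fun γ => (FM b χ n k β - ppM b (b k) * monomial β 1).coeff γ •
                FM b χ n (Sum.inl i) γ) := by ring
        rw [hsimp]
        refine le_trans (totalDegree_add _ _) ?_
        exact max_le hterm2 hterm3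
      rcases k with k₁ | k₂
      · by_cases hA : ∀ j ∈ α.support, k₁ ≤ j
        · rw [FM_caseA b χ (n+1) k₁ α hA]
          simp
        · exact key (FM_recL b χ n k₁ α hA)
      · have h0 : α ≠ 0 := by
          intro hc; subst hc; simp at hne
        exact key (FM_recR b χ n k₂ α h0)

end Rep2
section Rep3

open UniversalEnvelopingAlgebra MvPolynomial

variable {L : Type*} [LieRing L] [LieAlgebra ℂ L]
variable {ι₁ ι₂ : Type*} [LinearOrder ι₁]
variable (b : Module.Basis (ι₁ ⊕ ι₂) ℂ L) (χ : L →ₗ[ℂ] ℂ)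

lemma FM_stable {n m : ℕ} (k : ι₁ ⊕ ι₂) (α : ι₁ →₀ ℕ) (hα : degM α ≤ n) (hnm : n ≤ m) :
    FM b χ m k α = FM b χ n k α := by
  induction m with
  | zero => have : n = 0 := by omega
            subst this; rfl
  | succ m IH =>
    rcases Nat.lt_or_ge m n with h | h
    · have : n = m + 1 := by omega
      subst this; rfl
    · rw [(FM_SB b χ m).2 k α (le_trans hα h)]
      exact IH h

/-- the representation map (as a linear map into endomorphisms) -/
noncomputable def rhoM : L →ₗ[ℂ] Module.End ℂ (MvPolynomial ι₁ ℂ) :=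
  b.constr ℂ (fun k => (basisMonomials ι₁ ℂ).constr ℂ (fun α => FM b χ (degM α) k α))

lemma rhoM_basis_monomial (k : ι₁ ⊕ ι₂) (α : ι₁ →₀ ℕ) :
    rhoM b χ (b k) (monomial α 1) = FM b χ (degM α) k α := by
  rw [rhoM, Module.Basis.constr_basis]
  have h1 : (monomial α (1:ℂ)) = basisMonomials ι₁ ℂ α := by
    rw [coe_basisMonomials]
  rw [h1, Module.Basis.constr_basis]

lemma rhoM_basis_monomial' (k : ι₁ ⊕ ι₂) (α : ι₁ →₀ ℕ) {n : ℕ} (h : degM α ≤ n) :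
    rhoM b χ (b k) (monomial α 1) = FM b χ n k α := by
  rw [rhoM_basis_monomial, FM_stable b χ k α (le_refl _) h]

/-- case A -/
lemma rhoM_caseA (k₁ : ι₁) (α : ι₁ →₀ ℕ) (h : ∀ j ∈ α.support, k₁ ≤ j) :
    rhoM b χ (b (Sum.inl k₁)) (monomial α 1) = X k₁ * monomial α 1 := by
  rw [rhoM_basis_monomial, FM_caseA b χ _ k₁ α h]

/-- expansion of rhoM over the basis of L -/
lemma rhoM_expand (Z : L) (v : MvPolynomial ι₁ ℂ) :
    rhoM b χ Z v = (b.repr Z).sum fun j c => c • rhoM b χ (b j) v := by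
  conv_lhs => rw [← b.linearCombination_repr Z]
  rw [Finsupp.linearCombination_apply, map_finsuppSum]
  rw [LinearMap.finsupp_sum_apply]
  apply Finsupp.sum_congr
  intro j _
  rw [map_smul]
  rfl

lemma ppM_expand (Z : L) :
    ppM b Z = (b.repr Z).sum fun j c => c • ppM b (b j) := by
  conv_lhs => rw [← b.linearCombination_repr Z]
  rw [Finsupp.linearCombination_apply, map_finsuppSum]
  apply Finsupp.sum_congr
  intro j _
  rw [map_smul]

lemma ccM_expand (Z : L) :
    ccM b χ Z = (b.repr Z).sum fun j c => c • ccM b χ (b j) := by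
  conv_lhs => rw [← b.linearCombination_repr Z]
  rw [Finsupp.linearCombination_apply, map_finsuppSum]
  apply Finsupp.sum_congr
  intro j _
  rw [map_smul]

/-- applying a linear map to a polynomial, expanded over monomials -/
lemma lin_apply_as_sum {W : Type*} [AddCommGroup W] [Module ℂ W]
    (f : MvPolynomial ι₁ ℂ →ₗ[ℂ] W) (w : MvPolynomial ι₁ ℂ) :
    f w = w.support.sum (fun γ => w.coeff γ • f (monomial γ 1)) := by
  conv_lhs => rw [MvPolynomial.as_sum w]
  rw [map_sum]
  apply Finset.sum_congr rfl
  intro γ _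
  have : (monomial γ (coeff γ w) : MvPolynomial ι₁ ℂ) = coeff γ w • monomial γ 1 := by
    rw [smul_monomial, smul_eq_mul, mul_one]
  rw [this, map_smul]

/-- extensionality via basis -/
lemma ext_basis_apply {W : Type*} [AddCommGroup W] [Module ℂ W]
    (f g : L →ₗ[ℂ] W) (h : ∀ k, f (b k) = g (b k)) (Z : L) : f Z = g Z :=
  DFunLike.congr_fun (b.ext h) Z

/-- value at 1 -/
lemma rhoM_one (Z : L) :
    rhoM b χ Z 1 = ppM b Z - ccM b χ Z • 1 := by
  have key := ext_basis_apply b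
    ((LinearMap.applyₗ (1 : MvPolynomial ι₁ ℂ)).comp (rhoM b χ))
    (ppM b - LinearMap.smulRight (ccM b χ) (1 : MvPolynomial ι₁ ℂ))
    (fun k => by
      show rhoM b χ (b k) 1 = ppM b (b k) - ccM b χ (b k) • (1 : MvPolynomial ι₁ ℂ)
      have h1 : (1 : MvPolynomial ι₁ ℂ) = monomial 0 1 := by rw [monomial_zero']; simp
      have h0 : degM (0 : ι₁ →₀ ℕ) ≤ 0 := by simp [degM]
      rcases k with k₁ | k₂
      · rw [h1, rhoM_basis_monomial' b χ _ 0 h0, FM_caseA b χ 0 k₁ 0 (by simp)]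
        rw [← h1]
        simp
      · rw [h1, rhoM_basis_monomial' b χ _ 0 h0, FM_zeroR b χ 0 k₂]
        rw [← h1]
        simp only [ppM_basis_inr, ccM_basis_inr, zero_sub, neg_smul]) Z
  simpa using key

end Rep3
section Rep4

open UniversalEnvelopingAlgebra MvPolynomial

variable {L : Type*} [LieRing L] [LieAlgebra ℂ L]
variable {ι₁ ι₂ : Type*} [LinearOrder ι₁]
variable (b : Module.Basis (ι₁ ⊕ ι₂) ℂ L) (χ : L →ₗ[ℂ] ℂ)

lemma degM_pos_of_nonempty (α : ι₁ →₀ ℕ) (h : α.support.Nonempty) : 1 ≤ degM α := by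
  by_contra hc
  push_neg at hc
  have : α = 0 := degM_eq_zero α (by omega)
  subst this
  simp at h

/-- the main recursion formula at the level of rhoM -/
lemma rhoM_rec (k : ι₁ ⊕ ι₂) (α : ι₁ →₀ ℕ) (hne : α.support.Nonempty)
    (hk : ∀ k₁, k = Sum.inl k₁ → ¬ ∀ j ∈ α.support, k₁ ≤ j) :
    rhoM b χ (b k) (monomial α 1)
      = ppM b (b k) * monomial α 1
        + rhoM b χ ⁅b k, b (Sum.inl (α.support.min' hne))⁆
            (monomial (α - Finsupp.single (α.support.min' hne) 1) 1)
        + rhoM b χ (b (Sum.inl (α.support.min' hne)))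
            (rhoM b χ (b k) (monomial (α - Finsupp.single (α.support.min' hne) 1) 1)
              - ppM b (b k) * monomial (α - Finsupp.single (α.support.min' hne) 1) 1) := by
  set i := α.support.min' hne with hi
  set β := α - Finsupp.single i 1 with hβ
  have hdegα : degM β + 1 = degM α := by
    have h2 := degM_sub_single α i (α.support.min'_mem hne)
    rw [← hβ] at h2
    exact h2
  set m := degM β with hm
  have hαm : degM α = m + 1 := hdegα.symm
  have step1 : rhoM b χ (b k) (monomial α 1) = FMrec b (FM b χ m) k α := by
    rw [rhoM_basis_monomial, hαm]
    rcases k with k₁ | k₂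
    · exact FM_recL b χ m k₁ α (hk k₁ rfl)
    · refine FM_recR b χ m k₂ α ?_
      intro hc
      subst hc
      simp at hne
  rw [step1, FMrec, dif_pos hne]
  rw [← hi, ← hβ]
  congr 1
  · congr 1
    · rw [rhoM_expand b χ _ (monomial β 1)]
      apply Finsupp.sum_congr
      intro j _
      rw [rhoM_basis_monomial' b χ j β (le_refl m)]
  · have hw : rhoM b χ (b k) (monomial β 1) = FM b χ m k β :=
      rhoM_basis_monomial' b χ k β (le_refl m)
    rw [hw]
    rw [lin_apply_as_sum (rhoM b χ (b (Sum.inl i)))]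
    apply Finset.sum_congr rfl
    intro γ hγ
    have hγdeg : degM γ ≤ m := by
      have h1 := degM_le_of_mem_support _ _ hγ
      have h2 := (FM_SB b χ m).1 k β (le_refl m)
      omega
    rw [rhoM_basis_monomial' b χ (Sum.inl i) γ hγdeg]

-- monomial helpers
lemma mon_add_single (γ : ι₁ →₀ ℕ) (j : ι₁) :
    (monomial (γ + Finsupp.single j 1) 1 : MvPolynomial ι₁ ℂ) = X j * monomial γ 1 := by
  rw [X, monomial_mul, one_mul, add_comm]

lemma mem_support_add_single (γ : ι₁ →₀ ℕ) (j : ι₁) :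
    j ∈ (γ + Finsupp.single j 1).support := by
  rw [Finsupp.mem_support_iff]
  simp

lemma support_add_single_cases (γ : ι₁ →₀ ℕ) (j x : ι₁)
    (hx : x ∈ (γ + Finsupp.single j 1).support) : x ∈ γ.support ∨ x = j := by
  rw [Finsupp.mem_support_iff, Finsupp.add_apply] at hx
  rcases eq_or_ne x j with h | h
  · right; exact h
  · left
    rw [Finsupp.mem_support_iff]
    rw [Finsupp.single_apply, if_neg (Ne.symm h)] at hx
    simpa using hx
 
lemma add_sub_single_cancel (γ : ι₁ →₀ ℕ) (j : ι₁) :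
    (γ + Finsupp.single j 1) - Finsupp.single j 1 = γ := by
  ext x
  rw [Finsupp.tsub_apply, Finsupp.add_apply]
  omega

lemma min'_eq_of_le (s : Finset ι₁) (j : ι₁) (hj : j ∈ s) (hall : ∀ x ∈ s, j ≤ x) :
    s.min' ⟨j, hj⟩ = j :=
  le_antisymm (s.min'_le j hj) (s.le_min' _ j hall)

lemma min'_eq_of_le' (s : Finset ι₁) (hne : s.Nonempty) (j : ι₁) (hj : j ∈ s)
    (hall : ∀ x ∈ s, j ≤ x) : s.min' hne = j :=
  le_antisymm (s.min'_le j hj) (s.le_min' _ j hall)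

lemma rhoM_zero_bracket_pair (Z W : L) (v : MvPolynomial ι₁ ℂ) :
    rhoM b χ ⁅Z, W⁆ v + rhoM b χ ⁅W, Z⁆ v = 0 := by
  rw [← lie_skew Z W, map_neg]
  simp

/-- straightening: basis case -/
lemma rhoM_straighten_basis (i : ι₁) (β : ι₁ →₀ ℕ) (hle : ∀ j ∈ β.support, i ≤ j)
    (k : ι₁ ⊕ ι₂) :
    rhoM b χ (b k) (monomial (β + Finsupp.single i 1) 1)
      = rhoM b χ (b (Sum.inl i)) (rhoM b χ (b k) (monomial β 1))
        + rhoM b χ ⁅b k, b (Sum.inl i)⁆ (monomial β 1) := by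
  have hs1 : i ∈ (β + Finsupp.single i 1).support := mem_support_add_single β i
  have hall : ∀ j ∈ (β + Finsupp.single i 1).support, i ≤ j := by
    intro j hj
    rcases support_add_single_cases β i j hj with h | h
    · exact hle j h
    · exact le_of_eq h.symm
  have hne' : (β + Finsupp.single i 1).support.Nonempty := ⟨i, hs1⟩
  have hmin : (β + Finsupp.single i 1).support.min' hne' = i :=
    min'_eq_of_le' _ hne' i hs1 hall
  have hsub : (β + Finsupp.single i 1) - Finsupp.single i 1 = β :=
    add_sub_single_cancel β i
  rcases k with k₁ | k₂
  · rcases lt_trichotomy k₁ i with hki | hki | hki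
    · -- k₁ < i : case A on both sides
      have hA : ∀ j ∈ (β + Finsupp.single i 1).support, k₁ ≤ j := by
        intro j hj
        exact le_trans (le_of_lt hki) (hall j hj)
      have hAβ : ∀ j ∈ β.support, k₁ ≤ j := fun j hj => le_trans (le_of_lt hki) (hle j hj)
      rw [rhoM_caseA b χ k₁ _ hA, rhoM_caseA b χ k₁ β hAβ, ← mon_add_single β k₁]
      have hs1' : k₁ ∈ (β + Finsupp.single k₁ 1).support := mem_support_add_single β k₁
      have hne'' : (β + Finsupp.single k₁ 1).support.Nonempty := ⟨k₁, hs1'⟩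
      have hall' : ∀ j ∈ (β + Finsupp.single k₁ 1).support, k₁ ≤ j := by
        intro j hj
        rcases support_add_single_cases β k₁ j hj with h | h
        · exact le_trans (le_of_lt hki) (hle j h)
        · exact le_of_eq h.symm
      have hmin' : (β + Finsupp.single k₁ 1).support.min' hne'' = k₁ :=
        min'_eq_of_le' _ hne'' k₁ hs1' hall'
      have hrec := rhoM_rec b χ (Sum.inl i) (β + Finsupp.single k₁ 1) hne''
        (by
          intro x hx hforall
          injection hx with hx'
          subst hx'
          exact absurd (hforall k₁ hs1') (not_le.mpr hki))
      rw [hmin', add_sub_single_cancel] at hrec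
      rw [hrec, rhoM_caseA b χ i β hle, ppM_basis_inl, sub_self, map_zero]
      rw [← mon_add_single (β + Finsupp.single k₁ 1) i,
        ← mon_add_single (β + Finsupp.single i 1) k₁]
      have hmono : (β + Finsupp.single i 1) + Finsupp.single k₁ 1
          = (β + Finsupp.single k₁ 1) + Finsupp.single i 1 := add_right_comm _ _ _
      rw [hmono]
      linear_combination -(rhoM_zero_bracket_pair b χ (b (Sum.inl i)) (b (Sum.inl k₁))
        (monomial β 1))
    · -- k₁ = i
      subst hki
      have hall' : ∀ j ∈ (β + Finsupp.single k₁ 1).support, k₁ ≤ j := hall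
      rw [rhoM_caseA b χ k₁ _ hall, rhoM_caseA b χ k₁ β hle, ← mon_add_single β k₁,
        rhoM_caseA b χ k₁ _ hall', lie_self, map_zero]
      simp
    · -- i < k₁ : recursion on LHS
      have hrec := rhoM_rec b χ (Sum.inl k₁) (β + Finsupp.single i 1) hne'
        (by
          intro x hx hforall
          injection hx with hx'
          subst hx'
          exact absurd (hforall i hs1) (not_le.mpr hki))
      rw [hmin, hsub] at hrec
      rw [hrec, ppM_basis_inl, map_sub]
      have hkey : rhoM b χ (b (Sum.inl i)) ((X k₁ : MvPolynomial ι₁ ℂ) * monomial β 1)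
          = (X k₁ : MvPolynomial ι₁ ℂ) * monomial (β + Finsupp.single i 1) 1 := by
        rw [← mon_add_single β k₁]
        rw [rhoM_caseA b χ i _ (by
          intro j hj
          rcases support_add_single_cases β k₁ j hj with h | h
          · exact hle j h
          · exact le_trans (le_of_lt hki) (le_of_eq h.symm))]
        rw [← mon_add_single (β + Finsupp.single k₁ 1) i,
          ← mon_add_single (β + Finsupp.single i 1) k₁]
        rw [add_right_comm]
      rw [hkey]
      ring
  · -- k = inr
    have hrec := rhoM_rec b χ (Sum.inr k₂) (β + Finsupp.single i 1) hne'
      (by intro x hx; cases hx)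
    rw [hmin, hsub] at hrec
    rw [hrec, ppM_basis_inr]
    simp only [zero_mul, sub_zero, zero_add]
    ring

end Rep4
section Rep5

open UniversalEnvelopingAlgebra MvPolynomial

variable {L : Type*} [LieRing L] [LieAlgebra ℂ L]
variable {ι₁ ι₂ : Type*} [LinearOrder ι₁]
variable (b : Module.Basis (ι₁ ⊕ ι₂) ℂ L) (χ : L →ₗ[ℂ] ℂ)

/-- right bracket as a linear map -/
noncomputable def brR (c : L) : L →ₗ[ℂ] L where
  toFun Z := ⁅Z, c⁆
  map_add' x y := add_lie x y c
  map_smul' t x := smul_lie t x c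

/-- left bracket as a linear map -/
noncomputable def brL (c : L) : L →ₗ[ℂ] L where
  toFun Z := ⁅c, Z⁆
  map_add' := lie_add c
  map_smul' t x := lie_smul t c x

lemma rhoM_straighten (i : ι₁) (β : ι₁ →₀ ℕ) (hle : ∀ j ∈ β.support, i ≤ j) (Z : L) :
    rhoM b χ Z (monomial (β + Finsupp.single i 1) 1)
      = rhoM b χ (b (Sum.inl i)) (rhoM b χ Z (monomial β 1))
        + rhoM b χ ⁅Z, b (Sum.inl i)⁆ (monomial β 1) := by
  have key := ext_basis_apply b
    ((LinearMap.applyₗ ((monomial (β + Finsupp.single i 1) 1 : MvPolynomial ι₁ ℂ))).comp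
      (rhoM b χ))
    ((rhoM b χ (b (Sum.inl i))).comp
        ((LinearMap.applyₗ ((monomial β 1 : MvPolynomial ι₁ ℂ))).comp (rhoM b χ))
      + (LinearMap.applyₗ ((monomial β 1 : MvPolynomial ι₁ ℂ))).comp
          ((rhoM b χ).comp (brR (b (Sum.inl i)))))
    (fun k => by
      show rhoM b χ (b k) (monomial (β + Finsupp.single i 1) 1)
        = rhoM b χ (b (Sum.inl i)) (rhoM b χ (b k) (monomial β 1))
          + rhoM b χ ⁅b k, b (Sum.inl i)⁆ (monomial β 1)
      exact rhoM_straighten_basis b χ i β hle k) Z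
  exact key

lemma totalDegree_monomial_one (α : ι₁ →₀ ℕ) :
    (monomial α 1 : MvPolynomial ι₁ ℂ).totalDegree = degM α := by
  rw [totalDegree_monomial _ one_ne_zero]
  rfl

lemma rhoM_deg_mon (k : ι₁ ⊕ ι₂) (α : ι₁ →₀ ℕ) :
    (rhoM b χ (b k) (monomial α 1) - ppM b (b k) * monomial α 1).totalDegree ≤ degM α := by
  rw [rhoM_basis_monomial]
  exact (FM_SB b χ (degM α)).1 k α (le_refl _)

lemma rhoM_deg_basis_poly (k : ι₁ ⊕ ι₂) (P : MvPolynomial ι₁ ℂ) :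
    (rhoM b χ (b k) P - ppM b (b k) * P).totalDegree ≤ P.totalDegree := by
  have h1 := lin_apply_as_sum (rhoM b χ (b k)) P
  have h2 : ppM b (b k) * P
      = P.support.sum (fun γ => P.coeff γ • (ppM b (b k) * monomial γ 1)) := by
    conv_lhs => rw [MvPolynomial.as_sum P]
    rw [Finset.mul_sum]
    apply Finset.sum_congr rfl
    intro γ _
    have : (monomial γ (coeff γ P) : MvPolynomial ι₁ ℂ) = coeff γ P • monomial γ 1 := by
      rw [smul_monomial, smul_eq_mul, mul_one]
    rw [this, mul_smul_comm]
  rw [h1, h2, ← Finset.sum_sub_distrib]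
  refine le_trans (totalDegree_finset_sum _ _) ?_
  apply Finset.sup_le
  intro γ hγ
  rw [← smul_sub]
  refine le_trans (totalDegree_smul_le _ _) ?_
  exact le_trans (rhoM_deg_mon b χ k γ) (MvPolynomial.le_totalDegree hγ)

lemma rhoM_deg_poly (Z : L) (P : MvPolynomial ι₁ ℂ) :
    (rhoM b χ Z P - ppM b Z * P).totalDegree ≤ P.totalDegree := by
  have h1 := rhoM_expand b χ Z P
  have h2 : ppM b Z * P = (b.repr Z).sum fun j c => c • (ppM b (b j) * P) := by
    rw [ppM_expand b Z, Finsupp.sum, Finsupp.sum, Finset.sum_mul]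
    apply Finset.sum_congr rfl
    intro j _
    rw [smul_mul_assoc]
  rw [h1, h2, Finsupp.sum, Finsupp.sum, ← Finset.sum_sub_distrib]
  refine le_trans (totalDegree_finset_sum _ _) ?_
  apply Finset.sup_le
  intro j _
  rw [← smul_sub]
  refine le_trans (totalDegree_smul_le _ _) ?_
  exact rhoM_deg_basis_poly b χ j P

lemma rhoM_deg_le (Z : L) (P : MvPolynomial ι₁ ℂ) :
    (rhoM b χ Z P).totalDegree ≤ P.totalDegree + 1 := by
  have h : rhoM b χ Z P = (rhoM b χ Z P - ppM b Z * P) + ppM b Z * P := by ring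
  rw [h]
  refine le_trans (totalDegree_add _ _) ?_
  apply max_le
  · exact le_trans (rhoM_deg_poly b χ Z P) (by omega)
  · refine le_trans (totalDegree_mul _ _) ?_
    have := totalDegree_ppM_le b Z
    omega

end Rep5
section Rep6

open UniversalEnvelopingAlgebra MvPolynomial

variable {L : Type*} [LieRing L] [LieAlgebra ℂ L]
variable {ι₁ ι₂ : Type*} [LinearOrder ι₁]
variable (b : Module.Basis (ι₁ ⊕ ι₂) ℂ L) (χ : L →ₗ[ℂ] ℂ)

lemma ppM_bracket_inr
    (hbr1 : ∀ k l : ι₂, ∀ i : ι₁, b.repr ⁅b (Sum.inr k), b (Sum.inr l)⁆ (Sum.inl i) = 0)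
    (k l : ι₂) : ppM b ⁅b (Sum.inr k), b (Sum.inr l)⁆ = 0 := by
  rw [ppM_expand, Finsupp.sum]
  apply Finset.sum_eq_zero
  intro j hj
  rcases j with i | j₂
  · exact absurd (hbr1 k l i) (Finsupp.mem_support_iff.mp hj)
  · rw [ppM_basis_inr, smul_zero]

lemma comm_all_of_basis (v : MvPolynomial ι₁ ℂ)
    (hbasis : ∀ k l, rhoM b χ (b k) (rhoM b χ (b l) v) - rhoM b χ (b l) (rhoM b χ (b k) v)
      = rhoM b χ ⁅b k, b l⁆ v) (Z W : L) :
    rhoM b χ Z (rhoM b χ W v) - rhoM b χ W (rhoM b χ Z v) = rhoM b χ ⁅Z, W⁆ v := by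
  have step1 : ∀ (l : ι₁ ⊕ ι₂) (Z : L),
      rhoM b χ Z (rhoM b χ (b l) v) - rhoM b χ (b l) (rhoM b χ Z v)
        = rhoM b χ ⁅Z, b l⁆ v := by
    intro l Z
    exact ext_basis_apply b
      ((LinearMap.applyₗ (rhoM b χ (b l) v)).comp (rhoM b χ)
        - (rhoM b χ (b l)).comp ((LinearMap.applyₗ v).comp (rhoM b χ)))
      ((LinearMap.applyₗ v).comp ((rhoM b χ).comp (brR (b l))))
      (fun k => hbasis k l) Z
  exact ext_basis_apply b
    ((rhoM b χ Z).comp ((LinearMap.applyₗ v).comp (rhoM b χ))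
      - (LinearMap.applyₗ (rhoM b χ Z v)).comp (rhoM b χ))
    ((LinearMap.applyₗ v).comp ((rhoM b χ).comp (brL Z)))
    (fun l => step1 l Z) W

lemma rhoM_comm_mon
    (hbr1 : ∀ k l : ι₂, ∀ i : ι₁, b.repr ⁅b (Sum.inr k), b (Sum.inr l)⁆ (Sum.inl i) = 0)
    (hbr2 : ∀ k l : ι₂, ccM b χ ⁅b (Sum.inr k), b (Sum.inr l)⁆ = 0) :
    ∀ (n : ℕ) (α : ι₁ →₀ ℕ), degM α ≤ n → ∀ Z W : L,
    rhoM b χ Z (rhoM b χ W (monomial α 1)) - rhoM b χ W (rhoM b χ Z (monomial α 1))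
      = rhoM b χ ⁅Z, W⁆ (monomial α 1) := by
  intro n
  induction n using Nat.strong_induction_on with
  | _ n IH =>
  have IHpoly : ∀ (Z W : L) (w : MvPolynomial ι₁ ℂ), w.totalDegree < n →
      rhoM b χ Z (rhoM b χ W w) - rhoM b χ W (rhoM b χ Z w) = rhoM b χ ⁅Z, W⁆ w := by
    intro Z W w hw
    have h1 := lin_apply_as_sum ((rhoM b χ Z) ∘ₗ (rhoM b χ W)) w
    have h2 := lin_apply_as_sum ((rhoM b χ W) ∘ₗ (rhoM b χ Z)) w
    have h3 := lin_apply_as_sum (rhoM b χ ⁅Z, W⁆) w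
    simp only [LinearMap.comp_apply] at h1 h2
    rw [h1, h2, h3, ← Finset.sum_sub_distrib]
    apply Finset.sum_congr rfl
    intro γ hγ
    rw [← smul_sub]
    congr 1
    exact IH (degM γ) (lt_of_le_of_lt (degM_le_of_mem_support w γ hγ) hw) γ (le_refl _) Z W
  intro α hα
  have hbasis : ∀ k l, rhoM b χ (b k) (rhoM b χ (b l) (monomial α 1))
      - rhoM b χ (b l) (rhoM b χ (b k) (monomial α 1))
      = rhoM b χ ⁅b k, b l⁆ (monomial α 1) := by
    have caseA_comm : ∀ (l₁ : ι₁), (∀ j ∈ α.support, l₁ ≤ j) → ∀ (k : ι₁ ⊕ ι₂),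
        rhoM b χ (b k) (rhoM b χ (b (Sum.inl l₁)) (monomial α 1))
          - rhoM b χ (b (Sum.inl l₁)) (rhoM b χ (b k) (monomial α 1))
          = rhoM b χ ⁅b k, b (Sum.inl l₁)⁆ (monomial α 1) := by
      intro l₁ hA k
      rw [rhoM_caseA b χ l₁ α hA, ← mon_add_single α l₁,
        rhoM_straighten b χ l₁ α hA (b k)]
      ring
    intro k l
    by_cases hlA : ∃ l₁, l = Sum.inl l₁ ∧ ∀ j ∈ α.support, l₁ ≤ j
    · obtain ⟨l₁, rfl, hA⟩ := hlA
      exact caseA_comm l₁ hA k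
    · by_cases hkA : ∃ k₁, k = Sum.inl k₁ ∧ ∀ j ∈ α.support, k₁ ≤ j
      · obtain ⟨k₁, rfl, hA⟩ := hkA
        have h := caseA_comm k₁ hA l
        have p := rhoM_zero_bracket_pair b χ (b (Sum.inl k₁)) (b l) (monomial α 1)
        linear_combination - h - p
      · by_cases h0 : α = 0
        · subst h0
          rcases k with k₁ | k₂
          · exact absurd ⟨k₁, rfl, by simp⟩ hkA
          rcases l with l₁ | l₂
          · exact absurd ⟨l₁, rfl, by simp⟩ hlA
          have e1 : (monomial (0 : ι₁ →₀ ℕ) 1 : MvPolynomial ι₁ ℂ) = 1 := by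
            rw [monomial_zero']; simp
          rw [e1]
          rw [rhoM_one b χ (b (Sum.inr l₂)), rhoM_one b χ (b (Sum.inr k₂)),
            rhoM_one b χ ⁅b (Sum.inr k₂), b (Sum.inr l₂)⁆,
            ppM_basis_inr, ppM_basis_inr, ppM_bracket_inr b hbr1 k₂ l₂, hbr2 k₂ l₂]
          rw [zero_sub, zero_sub, zero_sub, map_neg, map_neg, map_smul, map_smul,
            rhoM_one b χ (b (Sum.inr k₂)), rhoM_one b χ (b (Sum.inr l₂)),
            ppM_basis_inr, ppM_basis_inr]
          simp only [zero_sub, smul_neg, smul_smul, zero_smul, neg_zero, neg_neg]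
          rw [mul_comm]
          ring
        · -- main recursion case
          have hne : α.support.Nonempty := Finsupp.support_nonempty_iff.mpr h0
          set i := α.support.min' hne with hi
          set β := α - Finsupp.single i 1 with hβ
          have him : i ∈ α.support := α.support.min'_mem hne
          have hαβ : β + Finsupp.single i 1 = α := sub_single_add α i him
          have hleβ : ∀ j ∈ β.support, i ≤ j := fun j hj =>
            α.support.min'_le j (support_sub_single α i hj)
          have hdegβ : degM β < n := by
            have h2 := degM_sub_single α i him
            rw [← hβ] at h2
            have h3 := degM_pos_of_nonempty α hne
            omega
          have hmonα : (monomial α 1 : MvPolynomial ι₁ ℂ)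
              = monomial (β + Finsupp.single i 1) 1 := by rw [hαβ]
          rw [hmonα]
          have hnotA : ∀ (m : ι₁ ⊕ ι₂), (¬ ∃ m₁, m = Sum.inl m₁ ∧ ∀ j ∈ α.support, m₁ ≤ j) →
              ∀ m₁, m = Sum.inl m₁ → i < m₁ := by
            intro m hm m₁ hmeq
            subst hmeq
            by_contra hc
            push_neg at hc
            exact hm ⟨m₁, rfl, fun j hj => le_trans hc (α.support.min'_le j hj)⟩
          have IHβ : ∀ Z W : L,
              rhoM b χ Z (rhoM b χ W (monomial β 1)) - rhoM b χ W (rhoM b χ Z (monomial β 1))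
                = rhoM b χ ⁅Z, W⁆ (monomial β 1) :=
            fun Z W => IH (degM β) hdegβ β (le_refl _) Z W
          -- the key commuting lemma
          have hC : ∀ (k' l' : ι₁ ⊕ ι₂), (∀ m₁, k' = Sum.inl m₁ → i < m₁) →
              (∀ m₁, l' = Sum.inl m₁ → i < m₁) →
              rhoM b χ (b k') (rhoM b χ (b (Sum.inl i)) (rhoM b χ (b l') (monomial β 1)))
                - rhoM b χ (b (Sum.inl i)) (rhoM b χ (b k') (rhoM b χ (b l') (monomial β 1)))
                = rhoM b χ ⁅b k', b (Sum.inl i)⁆ (rhoM b χ (b l') (monomial β 1)) := by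
            intro k' l' hk' hl'
            have hwdeg : (rhoM b χ (b l') (monomial β 1)
                - ppM b (b l') * monomial β 1).totalDegree < n := by
              have hd := rhoM_deg_poly b χ (b l') (monomial β 1)
              rw [totalDegree_monomial_one] at hd
              omega
            have hCw := IHpoly (b k') (b (Sum.inl i))
              (rhoM b χ (b l') (monomial β 1) - ppM b (b l') * monomial β 1) hwdeg
            have hCp : rhoM b χ (b k')
                  (rhoM b χ (b (Sum.inl i)) (ppM b (b l') * monomial β 1))
                - rhoM b χ (b (Sum.inl i))
                  (rhoM b χ (b k') (ppM b (b l') * monomial β 1))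
                = rhoM b χ ⁅b k', b (Sum.inl i)⁆ (ppM b (b l') * monomial β 1) := by
              rcases l' with l₁ | l₂
              · have hil : i < l₁ := hl' l₁ rfl
                rw [ppM_basis_inl, ← mon_add_single β l₁]
                have hle' : ∀ j ∈ (β + Finsupp.single l₁ 1).support, i ≤ j := by
                  intro j hj
                  rcases support_add_single_cases β l₁ j hj with h | h
                  · exact hleβ j h
                  · subst h; exact le_of_lt hil
                have hAi : rhoM b χ (b (Sum.inl i)) (monomial (β + Finsupp.single l₁ 1) 1)
                    = monomial ((β + Finsupp.single l₁ 1) + Finsupp.single i 1) 1 := by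
                  rw [rhoM_caseA b χ i _ hle', ← mon_add_single (β + Finsupp.single l₁ 1) i]
                rw [hAi, rhoM_straighten b χ i (β + Finsupp.single l₁ 1) hle' (b k')]
                simp only [mon_add_single]
                ring
              · rw [ppM_basis_inr, zero_mul]
                simp
            have hQdecomp : rhoM b χ (b l') (monomial β 1)
                = ppM b (b l') * monomial β 1
                  + (rhoM b χ (b l') (monomial β 1) - ppM b (b l') * monomial β 1) := by ring
            rw [hQdecomp]
            simp only [map_add]
            linear_combination hCp + hCw
          have hkgt := hnotA k hkA
          have hlgt := hnotA l hlA
          have e1 := rhoM_straighten b χ i β hleβ (b l)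
          have e2 := rhoM_straighten b χ i β hleβ (b k)
          have e3 := rhoM_straighten b χ i β hleβ ⁅b k, b l⁆
          have hCkl := hC k l hkgt hlgt
          have hClk := hC l k hlgt hkgt
          have hT2k := IHβ (b k) ⁅b l, b (Sum.inl i)⁆
          have hT2l := IHβ (b l) ⁅b k, b (Sum.inl i)⁆
          have hT3 := IHβ (b k) (b l)
          have hA3 := congrArg (rhoM b χ (b (Sum.inl i))) hT3
          rw [map_sub] at hA3
          have hJac : ⁅b k, ⁅b l, b (Sum.inl i)⁆⁆ - ⁅b l, ⁅b k, b (Sum.inl i)⁆⁆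
              = ⁅⁅b k, b l⁆, b (Sum.inl i)⁆ := (lie_lie (b k) (b l) (b (Sum.inl i))).symm
          have hJacR : rhoM b χ ⁅b k, ⁅b l, b (Sum.inl i)⁆⁆ (monomial β 1)
              - rhoM b χ ⁅b l, ⁅b k, b (Sum.inl i)⁆⁆ (monomial β 1)
              = rhoM b χ ⁅⁅b k, b l⁆, b (Sum.inl i)⁆ (monomial β 1) := by
            have h5 := congrArg (fun Z => rhoM b χ Z (monomial β 1)) hJac
            simp only [map_sub, LinearMap.sub_apply] at h5
            exact h5
          rw [e1, e2, e3]
          simp only [map_add]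
          linear_combination hCkl - hClk + hT2k - hT2l + hA3 + hJacR
  exact comm_all_of_basis b χ (monomial α 1) hbasis

/-- the commutation relation for all polynomials -/
lemma rhoM_comm
    (hbr1 : ∀ k l : ι₂, ∀ i : ι₁, b.repr ⁅b (Sum.inr k), b (Sum.inr l)⁆ (Sum.inl i) = 0)
    (hbr2 : ∀ k l : ι₂, ccM b χ ⁅b (Sum.inr k), b (Sum.inr l)⁆ = 0)
    (Z W : L) (v : MvPolynomial ι₁ ℂ) :
    rhoM b χ Z (rhoM b χ W v) - rhoM b χ W (rhoM b χ Z v) = rhoM b χ ⁅Z, W⁆ v := by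
  have h1 := lin_apply_as_sum ((rhoM b χ Z) ∘ₗ (rhoM b χ W)) v
  have h2 := lin_apply_as_sum ((rhoM b χ W) ∘ₗ (rhoM b χ Z)) v
  have h3 := lin_apply_as_sum (rhoM b χ ⁅Z, W⁆) v
  simp only [LinearMap.comp_apply] at h1 h2
  rw [h1, h2, h3, ← Finset.sum_sub_distrib]
  apply Finset.sum_congr rfl
  intro γ hγ
  rw [← smul_sub]
  congr 1
  exact rhoM_comm_mon b χ hbr1 hbr2 (degM γ) γ (le_refl _) Z W

/-- the representation as a Lie algebra homomorphism -/
noncomputable def rhoLie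
    (hbr1 : ∀ k l : ι₂, ∀ i : ι₁, b.repr ⁅b (Sum.inr k), b (Sum.inr l)⁆ (Sum.inl i) = 0)
    (hbr2 : ∀ k l : ι₂, ccM b χ ⁅b (Sum.inr k), b (Sum.inr l)⁆ = 0) :
    L →ₗ⁅ℂ⁆ Module.End ℂ (MvPolynomial ι₁ ℂ) :=
  { rhoM b χ with
    map_lie' := fun {Z W} => by
      apply LinearMap.ext
      intro v
      have h := rhoM_comm b χ hbr1 hbr2 Z W v
      simp only [Ring.lie_def]
      show rhoM b χ ⁅Z, W⁆ v = (rhoM b χ Z * rhoM b χ W - rhoM b χ W * rhoM b χ Z) v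
      rw [LinearMap.sub_apply, Module.End.mul_apply, Module.End.mul_apply]
      linear_combination -h }

lemma rhoLie_apply (hbr1 : ∀ k l : ι₂, ∀ i : ι₁,
      b.repr ⁅b (Sum.inr k), b (Sum.inr l)⁆ (Sum.inl i) = 0)
    (hbr2 : ∀ k l : ι₂, ccM b χ ⁅b (Sum.inr k), b (Sum.inr l)⁆ = 0)
    (Z : L) (v : MvPolynomial ι₁ ℂ) :
    rhoLie b χ hbr1 hbr2 Z v = rhoM b χ Z v := rfl

end Rep6
section Rep7

open UniversalEnvelopingAlgebra MvPolynomial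

variable {L : Type*} [LieRing L] [LieAlgebra ℂ L]
variable {ι₁ ι₂ : Type*} [LinearOrder ι₁]
variable (b : Module.Basis (ι₁ ⊕ ι₂) ℂ L) (χ : L →ₗ[ℂ] ℂ)

/-- element of 𝔪 with given coordinates -/
noncomputable def Yc : (ι₁ →₀ ℂ) →ₗ[ℂ] L :=
  Finsupp.linearCombination ℂ (fun i => b (Sum.inl i))

lemma ppM_Yc (c : ι₁ →₀ ℂ) : ppM b (Yc b c) = linF ι₁ c := by
  induction c using Finsupp.induction_linear with
  | zero => simp
  | add f g hf hg => rw [map_add, map_add, map_add, hf, hg]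
  | single a t =>
    rw [Yc, Finsupp.linearCombination_single, linF, Finsupp.linearCombination_single]
    rw [map_smul, ppM_basis_inl]

lemma ccM_Yc (c : ι₁ →₀ ℂ) : ccM b χ (Yc b c) = 0 := by
  induction c using Finsupp.induction_linear with
  | zero => simp
  | add f g hf hg => rw [map_add, map_add, hf, hg, add_zero]
  | single a t =>
    rw [Yc, Finsupp.linearCombination_single, map_smul, ccM_basis_inl, smul_zero]

lemma rhoM_pow_one_deg (Z : L) :
    ∀ k : ℕ, ((rhoM b χ Z ^ k) (1 : MvPolynomial ι₁ ℂ) - ppM b Z ^ k).totalDegree ≤ k - 1 := by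
  have key : ∀ k : ℕ, 1 ≤ k →
      ((rhoM b χ Z ^ k) (1 : MvPolynomial ι₁ ℂ) - ppM b Z ^ k).totalDegree ≤ k - 1 := by
    intro k
    induction k with
    | zero => omega
    | succ k IHk =>
      intro _
      rcases Nat.eq_or_lt_of_le (Nat.one_le_iff_ne_zero.mpr (Nat.succ_ne_zero k)) with h1 | h1
      · -- k + 1 = 1
        have hk0 : k = 0 := by omega
        subst hk0
        rw [pow_one, pow_one, rhoM_one]
        have : ppM b Z - ccM b χ Z • 1 - ppM b Z = -(ccM b χ Z • 1) := by ring
        rw [this]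
        rw [totalDegree_neg]
        refine le_trans (totalDegree_smul_le _ _) ?_
        simp
      · -- k ≥ 1
        have hk1 : 1 ≤ k := by omega
        have IH := IHk hk1
        have hsplit : (rhoM b χ Z ^ (k+1)) (1 : MvPolynomial ι₁ ℂ)
            = rhoM b χ Z ((rhoM b χ Z ^ k) 1) := by
          rw [pow_succ']
          rfl
        have hdec : (rhoM b χ Z ^ (k+1)) (1 : MvPolynomial ι₁ ℂ) - ppM b Z ^ (k+1)
            = rhoM b χ Z ((rhoM b χ Z ^ k) 1 - ppM b Z ^ k)
              + (rhoM b χ Z (ppM b Z ^ k) - ppM b Z * ppM b Z ^ k) := by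
          rw [hsplit, map_sub]
          ring
        rw [hdec]
        refine le_trans (totalDegree_add _ _) ?_
        apply max_le
        · refine le_trans (rhoM_deg_le b χ Z _) ?_
          omega
        · refine le_trans (rhoM_deg_poly b χ Z _) ?_
          refine le_trans (totalDegree_pow _ _) ?_
          have := totalDegree_ppM_le b Z
          calc k * (ppM b Z).totalDegree ≤ k * 1 := Nat.mul_le_mul_left k this
          _ ≤ k + 1 - 1 := by omega
  intro k
  rcases Nat.eq_zero_or_pos k with h | h
  · subst h
    simp
  · exact key k h

lemma T_injective (T : MvPolynomial ι₁ ℂ →ₗ[ℂ] MvPolynomial ι₁ ℂ)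
    (hT : ∀ (c : ι₁ →₀ ℂ) (k : ℕ), T (linF ι₁ c ^ k) = (rhoM b χ (Yc b c) ^ k) 1) :
    ∀ Q : MvPolynomial ι₁ ℂ, T Q = 0 → Q = 0 := by
  have main : ∀ (n : ℕ) (Q : MvPolynomial ι₁ ℂ), Q.totalDegree ≤ n → T Q = 0 → Q = 0 := by
    intro n
    induction n with
    | zero =>
      intro Q hQ hTQ
      have hmem := mem_span_linF_pow_of_totalDegree_le Q 0 hQ
      have hfix : T Q = Q := by
        have hsub : ∀ R ∈ Submodule.span ℂ
            {q : MvPolynomial ι₁ ℂ | ∃ c k, k ≤ 0 ∧ q = linF ι₁ c ^ k}, T R = R := by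
          intro R hR
          induction hR using Submodule.span_induction with
          | mem q hq =>
            obtain ⟨c, k, hk, rfl⟩ := hq
            have hk0 : k = 0 := by omega
            subst hk0
            rw [hT c 0, pow_zero, pow_zero]
            rfl
          | zero => simp
          | add x y _ _ hx hy => rw [map_add, hx, hy]
          | smul a x _ hx => rw [map_smul, hx]
        exact hsub Q hmem
      rw [← hfix, hTQ]
    | succ n IH =>
      intro Q hQ hTQ
      have hmem := mem_span_linF_pow_of_totalDegree_le Q (n+1) hQ
      have hdiff : T Q - Q ∈ restrictTotalDegree ι₁ ℂ n := by
        have hsub : Submodule.span ℂ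
            {q : MvPolynomial ι₁ ℂ | ∃ c k, k ≤ n + 1 ∧ q = linF ι₁ c ^ k}
            ≤ Submodule.comap (T - LinearMap.id) (restrictTotalDegree ι₁ ℂ n) := by
          apply Submodule.span_le.mpr
          rintro q ⟨c, k, hk, rfl⟩
          simp only [SetLike.mem_coe, Submodule.mem_comap, LinearMap.sub_apply, LinearMap.id_apply]
          rw [hT c k, mem_restrictTotalDegree]
          have h1 := rhoM_pow_one_deg b χ (Yc b c) k
          rw [ppM_Yc b c] at h1
          exact le_trans h1 (by omega)
        exact hsub hmem
      have hQn : Q.totalDegree ≤ n := by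
        have hQeq : Q = -(T Q - Q) := by rw [hTQ]; ring
        rw [hQeq, totalDegree_neg]
        exact (mem_restrictTotalDegree _ _ _).mp hdiff
      exact IH Q hQn hTQ
  intro Q hQ
  exact main Q.totalDegree Q (le_refl _) hQ

end Rep7


section Glue

open UniversalEnvelopingAlgebra MvPolynomial

variable {L : Type*} [LieRing L] [LieAlgebra ℂ L]
variable {ι₁ ι₂ : Type*} [LinearOrder ι₁]
variable (b : Module.Basis (ι₁ ⊕ ι₂) ℂ L) (χ : L →ₗ[ℂ] ℂ)

lemma toPoly_apply (Y : L) :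
    toPoly b Y = (b.repr Y).sum fun k c => c • X k := by
  rw [toPoly]
  simp only [LinearMap.coe_comp, Function.comp_apply, LinearEquiv.coe_coe]
  rw [Finsupp.linearCombination_apply]

lemma adS_toPoly (φ : L →ₗ[ℂ] L) (Y : L) :
    adS b φ (toPoly b Y) = toPoly b (φ Y) := by
  rw [toPoly_apply b Y, map_finsuppSum]
  conv_rhs => rw [← b.linearCombination_repr Y]
  rw [Finsupp.linearCombination_apply, map_finsuppSum, map_finsuppSum]
  apply Finsupp.sum_congr
  intro k _
  rw [map_smul, map_smul, map_smul, adS, aeval_X]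

lemma toPoly_eq_linF (Y : L) : toPoly b Y = linF (ι₁ ⊕ ι₂) (b.repr Y) := rfl

lemma adU_lam_comm (lam : MvPolynomial (ι₁ ⊕ ι₂) ℂ →ₗ[ℂ] UniversalEnvelopingAlgebra ℂ L)
    (hlam : ∀ (Y : L) (k : ℕ), lam (toPoly b Y ^ k) = (ι ℂ Y) ^ k)
    (φ : L →ₗ⁅ℂ⁆ L) (P : MvPolynomial (ι₁ ⊕ ι₂) ℂ) :
    adU φ (lam P) = lam (adS b φ.toLinearMap P) := by
  have hext : (adU (L := L) φ).toLinearMap ∘ₗ lam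
      = lam ∘ₗ (adS b φ.toLinearMap).toLinearMap := by
    apply LinearMap.ext_on (span_linF_pow_eq_top (ι := ι₁ ⊕ ι₂))
    rintro q ⟨c, k, rfl⟩
    have hY : linF (ι₁ ⊕ ι₂) c = toPoly b (b.repr.symm c) := by
      rw [toPoly_eq_linF, LinearEquiv.apply_symm_apply]
    simp only [LinearMap.coe_comp, Function.comp_apply, AlgHom.toLinearMap_apply]
    rw [hY, hlam, map_pow, map_pow, adS_toPoly, hlam, adU, lift_ι_apply]
    rfl
  exact DFunLike.congr_fun hext P

lemma mem_supported_of_rename (Q : MvPolynomial ι₁ ℂ) :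
    rename Sum.inl Q ∈ supported ℂ (Set.range (Sum.inl : ι₁ → ι₁ ⊕ ι₂)) := by
  classical
  rw [mem_supported]
  intro x hx
  have h2 := vars_rename Sum.inl Q hx
  obtain ⟨i, _, rfl⟩ := Finset.mem_image.mp h2
  exact ⟨i, rfl⟩

lemma exists_rename_of_mem_supported (P : MvPolynomial (ι₁ ⊕ ι₂) ℂ)
    (hP : P ∈ supported ℂ (Set.range (Sum.inl : ι₁ → ι₁ ⊕ ι₂))) :
    ∃ Q, rename Sum.inl Q = P := by
  rw [supported_eq_range_rename] at hP
  obtain ⟨Q', hQ'⟩ := hP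
  refine ⟨rename (fun x => (Equiv.ofInjective Sum.inl Sum.inl_injective).symm x) Q', ?_⟩
  rw [rename_rename]
  rw [show ((Sum.inl : ι₁ → ι₁ ⊕ ι₂) ∘ fun x => (Equiv.ofInjective Sum.inl Sum.inl_injective).symm x)
      = fun x : Set.range (Sum.inl : ι₁ → ι₁ ⊕ ι₂) => (x : ι₁ ⊕ ι₂) from funext fun x => by
    simp [Equiv.apply_ofInjective_symm]]
  exact hQ'

lemma adS_mem_supported (φ : L →ₗ[ℂ] L)
    (hφ : ∀ i : ι₁, toPoly b (φ (b (Sum.inl i)))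
      ∈ supported ℂ (Set.range (Sum.inl : ι₁ → ι₁ ⊕ ι₂)))
    (P : MvPolynomial (ι₁ ⊕ ι₂) ℂ)
    (hP : P ∈ supported ℂ (Set.range (Sum.inl : ι₁ → ι₁ ⊕ ι₂))) :
    adS b φ P ∈ supported ℂ (Set.range (Sum.inl : ι₁ → ι₁ ⊕ ι₂)) := by
  rw [supported_eq_adjoin_X] at hP
  induction hP using Algebra.adjoin_induction with
  | mem x hx =>
    obtain ⟨x', ⟨i, rfl⟩, rfl⟩ := hx
    rw [adS, aeval_X]
    exact hφ i
  | algebraMap r =>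
    rw [AlgHom.commutes]
    exact Subalgebra.algebraMap_mem _ r
  | add x y hx hy ihx ihy =>
    rw [map_add]
    exact Subalgebra.add_mem _ ihx ihy
  | mul x y hx hy ihx ihy =>
    rw [map_mul]
    exact Subalgebra.mul_mem _ ihx ihy

lemma coord_vanish_of_mem_span (S : Set L) (f : L →ₗ[ℂ] ℂ) (hf : ∀ s ∈ S, f s = 0)
    {Z : L} (hZ : Z ∈ Submodule.span ℂ S) : f Z = 0 := by
  induction hZ using Submodule.span_induction with
  | mem x hx => exact hf x hx
  | zero => simp
  | add x y _ _ hx hy => rw [map_add, hx, hy, add_zero]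
  | smul a x _ hx => rw [map_smul, hx, smul_zero]

lemma m_le_span (𝔥 : LieSubalgebra ℂ L) (𝔪 : Submodule ℂ L) (h𝔪 : IsCompl 𝔪 𝔥.toSubmodule)
    (hb𝔪 : ∀ i, b (Sum.inl i) ∈ 𝔪) (hb𝔥 : ∀ j, b (Sum.inr j) ∈ 𝔥) :
    𝔪 ≤ Submodule.span ℂ (Set.range fun i => b (Sum.inl i))
    ∧ 𝔥.toSubmodule ≤ Submodule.span ℂ (Set.range fun j => b (Sum.inr j)) := by
  set M' := Submodule.span ℂ (Set.range fun i => b (Sum.inl i)) with hM'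
  set H' := Submodule.span ℂ (Set.range fun j => b (Sum.inr j)) with hH'
  have hM'le : M' ≤ 𝔪 := Submodule.span_le.mpr (by rintro x ⟨i, rfl⟩; exact hb𝔪 i)
  have hH'le : H' ≤ 𝔥.toSubmodule := Submodule.span_le.mpr (by rintro x ⟨j, rfl⟩; exact hb𝔥 j)
  have htop : M' ⊔ H' = ⊤ := by
    rw [eq_top_iff, ← b.span_eq]
    apply Submodule.span_le.mpr
    rintro x ⟨k, rfl⟩
    rcases k with i | j
    · exact Submodule.mem_sup_left (Submodule.subset_span ⟨i, rfl⟩)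
    · exact Submodule.mem_sup_right (Submodule.subset_span ⟨j, rfl⟩)
  constructor
  · intro Z hZ
    have hmem : Z ∈ M' ⊔ H' := htop ▸ Submodule.mem_top
    obtain ⟨zm, hzm, zh, hzh, hsum⟩ := Submodule.mem_sup.mp hmem
    have hker : Z - zm ∈ 𝔪 ⊓ 𝔥.toSubmodule := by
      constructor
      · exact Submodule.sub_mem _ hZ (hM'le hzm)
      · have h5 : Z - zm = zh := by rw [← hsum]; abel
        rw [h5]
        exact hH'le hzh
    rw [h𝔪.inf_eq_bot] at hker
    have h6 : Z = zm := by
      have h7 : Z - zm = 0 := (Submodule.mem_bot ℂ).mp hker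
      rw [sub_eq_zero] at h7
      exact h7
    rw [h6]
    exact hzm
  · intro Z hZ
    have hmem : Z ∈ M' ⊔ H' := htop ▸ Submodule.mem_top
    obtain ⟨zm, hzm, zh, hzh, hsum⟩ := Submodule.mem_sup.mp hmem
    have hker : Z - zh ∈ 𝔪 ⊓ 𝔥.toSubmodule := by
      constructor
      · have h5 : Z - zh = zm := by rw [← hsum]; abel
        rw [h5]
        exact hM'le hzm
      · exact Submodule.sub_mem _ hZ (hH'le hzh)
    rw [h𝔪.inf_eq_bot] at hker
    have h6 : Z = zh := by
      have h7 : Z - zh = 0 := (Submodule.mem_bot ℂ).mp hker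
      rw [sub_eq_zero] at h7
      exact h7
    rw [h6]
    exact hzh

lemma coord_inl_eq_zero (𝔥 : LieSubalgebra ℂ L)
    (hle : ∀ Z ∈ 𝔥,
      Z ∈ Submodule.span ℂ (Set.range fun j => b (Sum.inr j)))
    (X : L) (hX : X ∈ 𝔥) (i : ι₁) : b.repr X (Sum.inl i) = 0 := by
  have h := coord_vanish_of_mem_span (Set.range fun j => b (Sum.inr j)) (b.coord (Sum.inl i))
    (by
      rintro s ⟨j, rfl⟩
      rw [Module.Basis.coord_apply, b.repr_self]
      exact Finsupp.single_eq_of_ne (by simp))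
    (hle X hX)
  rw [Module.Basis.coord_apply] at h
  exact h

lemma coord_inr_eq_zero (𝔪 : Submodule ℂ L)
    (hle : 𝔪 ≤ Submodule.span ℂ (Set.range fun i => b (Sum.inl i)))
    (X : L) (hX : X ∈ 𝔪) (j : ι₂) : b.repr X (Sum.inr j) = 0 := by
  have h := coord_vanish_of_mem_span (Set.range fun i => b (Sum.inl i)) (b.coord (Sum.inr j))
    (by
      rintro s ⟨i, rfl⟩
      rw [Module.Basis.coord_apply, b.repr_self]
      exact Finsupp.single_eq_of_ne (by simp))
    (hle hX)
  rw [Module.Basis.coord_apply] at h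
  exact h

lemma ppM_eq_zero_of (Xx : L) (hX : ∀ i : ι₁, b.repr Xx (Sum.inl i) = 0) : ppM b Xx = 0 := by
  rw [ppM]
  simp only [LinearMap.coe_comp, Function.comp_apply, LinearEquiv.coe_coe]
  rw [Finsupp.linearCombination_apply, Finsupp.sum]
  apply Finset.sum_eq_zero
  intro k hk
  rcases k with i | j
  · exact absurd (hX i) (Finsupp.mem_support_iff.mp hk)
  · simp

lemma ccM_eq_chi_of (Xx : L) (hX : ∀ i : ι₁, b.repr Xx (Sum.inl i) = 0) :
    ccM b χ Xx = χ Xx := by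
  rw [ccM_expand]
  conv_rhs => rw [← b.linearCombination_repr Xx]
  rw [Finsupp.linearCombination_apply, map_finsuppSum]
  apply Finsupp.sum_congr
  intro k hk
  rcases k with i | j
  · exact absurd (hX i) (Finsupp.mem_support_iff.mp hk)
  · rw [ccM_basis_inr, map_smul]

lemma toPoly_mem_supported_of (Z : L) (hZ : ∀ j : ι₂, b.repr Z (Sum.inr j) = 0) :
    toPoly b Z ∈ supported ℂ (Set.range (Sum.inl : ι₁ → ι₁ ⊕ ι₂)) := by
  rw [toPoly_apply, Finsupp.sum]
  apply Subalgebra.sum_mem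
  intro k hk
  rcases k with i | j
  · exact Subalgebra.smul_mem _ (X_mem_supported.mpr (Set.mem_range_self i)) _
  · exact absurd (hZ j) (Finsupp.mem_support_iff.mp hk)

lemma rename_linF_toPoly (c : ι₁ →₀ ℂ) :
    rename (Sum.inl : ι₁ → ι₁ ⊕ ι₂) (linF ι₁ c) = toPoly b (Yc b c) := by
  induction c using Finsupp.induction_linear with
  | zero => simp
  | add f g hf hg => simp only [map_add, hf, hg]
  | single a t =>
    rw [linF, Finsupp.linearCombination_single, Yc, Finsupp.linearCombination_single,
      map_smul, map_smul, rename_X, toPoly_apply, b.repr_self,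
      Finsupp.sum_single_index (by simp), one_smul]

end Glue

theorem lam_Sm_inter_dMod_eq_lam_I_and_le_dH
    (L : Type*) [LieRing L] [LieAlgebra ℂ L] [Module.Finite ℂ L]
    (H : Type*) [Group H]
    (𝔥 : LieSubalgebra ℂ L) (𝔪 : Submodule ℂ L) (h𝔪 : IsCompl 𝔪 𝔥.toSubmodule)
    (χ : L →ₗ[ℂ] ℂ) (hχchar : ∀ X ∈ 𝔥, ∀ Y ∈ 𝔥, χ ⁅X, Y⁆ = 0)
    (Ad : H → (L →ₗ⁅ℂ⁆ L))
    (hAd1 : Ad 1 = LieHom.id)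
    (hAdMul : ∀ h h' : H, Ad (h * h') = (Ad h).comp (Ad h'))
    (hAd𝔥 : ∀ (h : H), ∀ X ∈ 𝔥, Ad h X ∈ 𝔥)
    (hAdχ : ∀ (h : H), ∀ X ∈ 𝔥, χ (Ad h X) = χ X)
    -- reductivity: the complement 𝔪 is Ad(H)-invariant
    (hAd𝔪 : ∀ (h : H), ∀ X ∈ 𝔪, Ad h X ∈ 𝔪)
    -- a basis of 𝔤 adapted to the decomposition 𝔤 = 𝔪 ⊕ 𝔥
    (ι₁ ι₂ : Type*) (b : Module.Basis (ι₁ ⊕ ι₂) ℂ L)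
    (hb𝔪 : ∀ i, b (Sum.inl i) ∈ 𝔪) (hb𝔥 : ∀ j, b (Sum.inr j) ∈ 𝔥)
    -- the symmetrization map λ : S(𝔤) → U(𝔤)
    (lam : MvPolynomial (ι₁ ⊕ ι₂) ℂ →ₗ[ℂ] UniversalEnvelopingAlgebra ℂ L)
    (hlam : ∀ (Y : L) (k : ℕ), lam (toPoly b Y ^ k) = (ι ℂ Y) ^ k) :
    (lam '' ((MvPolynomial.supported ℂ (Set.range Sum.inl) :
            Subalgebra ℂ (MvPolynomial (ι₁ ⊕ ι₂) ℂ)) :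
          Set (MvPolynomial (ι₁ ⊕ ι₂) ℂ))) ∩
        {D | ∀ h : H, adU (Ad h) D - D ∈ leftIdealHChi 𝔥 χ} =
      lam '' {P | P ∈ MvPolynomial.supported ℂ (Set.range Sum.inl) ∧
        ∀ h : H, adS b (Ad h).toLinearMap P = P} ∧
      lam '' {P | P ∈ MvPolynomial.supported ℂ (Set.range Sum.inl) ∧
          ∀ h : H, adS b (Ad h).toLinearMap P = P} ⊆
        {D | ∀ h : H, adU (Ad h) D = D} := by
  letI : DecidableRel (WellOrderingRel (α := ι₁)) := fun _ _ => Classical.propDecidable _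
  letI : LinearOrder ι₁ := linearOrderOfSTO WellOrderingRel
  obtain ⟨h𝔪span, h𝔥span⟩ := m_le_span b 𝔥 𝔪 h𝔪 hb𝔪 hb𝔥
  have hcoord𝔥 : ∀ X ∈ 𝔥, ∀ i : ι₁, b.repr X (Sum.inl i) = 0 :=
    fun X hX i => coord_inl_eq_zero b 𝔥 (fun Z hZ => h𝔥span hZ) X hX i
  have hcoord𝔪 : ∀ X ∈ 𝔪, ∀ j : ι₂, b.repr X (Sum.inr j) = 0 :=
    fun X hX j => coord_inr_eq_zero b 𝔪 h𝔪span X hX j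
  have hbr1 : ∀ k l : ι₂, ∀ i : ι₁, b.repr ⁅b (Sum.inr k), b (Sum.inr l)⁆ (Sum.inl i) = 0 :=
    fun k l i => hcoord𝔥 _ (𝔥.lie_mem (hb𝔥 k) (hb𝔥 l)) i
  have hbr2 : ∀ k l : ι₂, ccM b χ ⁅b (Sum.inr k), b (Sum.inr l)⁆ = 0 := by
    intro k l
    rw [ccM_eq_chi_of b χ _ (fun i => hbr1 k l i)]
    exact hχchar _ (hb𝔥 k) _ (hb𝔥 l)
  set Lft := UniversalEnvelopingAlgebra.lift ℂ (rhoLie b χ hbr1 hbr2) with hLft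
  set ev : UniversalEnvelopingAlgebra ℂ L →ₗ[ℂ] MvPolynomial ι₁ ℂ :=
    (LinearMap.applyₗ (1 : MvPolynomial ι₁ ℂ)).comp Lft.toLinearMap with hev
  have hev_apply : ∀ u, ev u = (Lft u) 1 := fun u => rfl
  have hev_ideal : leftIdealHChi 𝔥 χ ≤ LinearMap.ker ev := by
    rw [leftIdealHChi, Submodule.span_le]
    rintro w ⟨u, X, hX, rfl⟩
    rw [SetLike.mem_coe, LinearMap.mem_ker, hev_apply, map_mul, Module.End.mul_apply]
    have h1 : Lft (ι ℂ X + algebraMap ℂ (UniversalEnvelopingAlgebra ℂ L) (χ X))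
        = rhoM b χ X + algebraMap ℂ (Module.End ℂ (MvPolynomial ι₁ ℂ)) (χ X) := by
      rw [map_add, AlgHom.commutes, hLft, lift_ι_apply]
      rfl
    rw [h1]
    have h2 : (rhoM b χ X + algebraMap ℂ (Module.End ℂ (MvPolynomial ι₁ ℂ)) (χ X))
        (1 : MvPolynomial ι₁ ℂ) = 0 := by
      rw [LinearMap.add_apply, rhoM_one, ppM_eq_zero_of b X (hcoord𝔥 X hX),
        ccM_eq_chi_of b χ X (hcoord𝔥 X hX), Module.algebraMap_end_apply]
      abel
    rw [h2, map_zero]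
  have hK : ∀ P ∈ MvPolynomial.supported ℂ (Set.range (Sum.inl : ι₁ → ι₁ ⊕ ι₂)),
      lam P ∈ leftIdealHChi 𝔥 χ → P = 0 := by
    intro P hP hPideal
    obtain ⟨Q, rfl⟩ := exists_rename_of_mem_supported P hP
    set T : MvPolynomial ι₁ ℂ →ₗ[ℂ] MvPolynomial ι₁ ℂ :=
      ev ∘ₗ lam ∘ₗ (rename (Sum.inl : ι₁ → ι₁ ⊕ ι₂) :
        MvPolynomial ι₁ ℂ →ₐ[ℂ] MvPolynomial (ι₁ ⊕ ι₂) ℂ).toLinearMap with hT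
    have hTQ : T Q = 0 := by
      have h3 := hev_ideal hPideal
      rw [LinearMap.mem_ker] at h3
      exact h3
    have hThyp : ∀ (c : ι₁ →₀ ℂ) (k : ℕ), T (linF ι₁ c ^ k) = (rhoM b χ (Yc b c) ^ k) 1 := by
      intro c k
      show ev (lam ((rename (Sum.inl : ι₁ → ι₁ ⊕ ι₂)) (linF ι₁ c ^ k))) = _
      rw [map_pow, rename_linF_toPoly b c, hlam (Yc b c) k, hev_apply, map_pow, hLft,
        lift_ι_apply]
      rfl
    have hQ0 := T_injective b χ T hThyp Q hTQ
    rw [hQ0, map_zero]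
  have hF1 : ∀ (h : H) (P : MvPolynomial (ι₁ ⊕ ι₂) ℂ),
      adU (Ad h) (lam P) = lam (adS b (Ad h).toLinearMap P) :=
    fun h P => adU_lam_comm b lam hlam (Ad h) P
  have hF2 : ∀ (h : H) (P : MvPolynomial (ι₁ ⊕ ι₂) ℂ),
      P ∈ MvPolynomial.supported ℂ (Set.range (Sum.inl : ι₁ → ι₁ ⊕ ι₂)) →
      adS b (Ad h).toLinearMap P ∈
        MvPolynomial.supported ℂ (Set.range (Sum.inl : ι₁ → ι₁ ⊕ ι₂)) := by
    intro h P hP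
    apply adS_mem_supported b _ _ P hP
    intro i
    apply toPoly_mem_supported_of
    intro j
    exact hcoord𝔪 _ (hAd𝔪 h _ (hb𝔪 i)) j
  constructor
  · ext D
    simp only [Set.mem_inter_iff, Set.mem_image, Set.mem_setOf_eq, SetLike.mem_coe]
    constructor
    · rintro ⟨⟨P, hP, rfl⟩, hD⟩
      refine ⟨P, ⟨hP, ?_⟩, rfl⟩
      intro h
      have h1 := hD h
      rw [hF1 h P] at h1
      have h2 : lam (adS b (Ad h).toLinearMap P - P) ∈ leftIdealHChi 𝔥 χ := by
        rw [map_sub]; exact h1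
      have h3 : adS b (Ad h).toLinearMap P - P ∈
          MvPolynomial.supported ℂ (Set.range (Sum.inl : ι₁ → ι₁ ⊕ ι₂)) :=
        Subalgebra.sub_mem _ (hF2 h P hP) hP
      have h4 := hK _ h3 h2
      rw [sub_eq_zero] at h4
      exact h4
    · rintro ⟨P, ⟨hP, hinv⟩, rfl⟩
      refine ⟨⟨P, hP, rfl⟩, ?_⟩
      intro h
      rw [hF1 h P, hinv h, sub_self]
      exact Submodule.zero_mem _
  · rintro D ⟨P, ⟨hP, hinv⟩, rfl⟩
    intro h
    rw [hF1 h P, hinv h]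
end

section
/- Let 𝔤 be a complex semisimple Lie algebra with Cartan subalgebra 𝔥, root system Δ, positive system Δ⁺, and 𝔫 = ⊕_{α∈Δ⁺} 𝔤^α. Then there is no ad(𝔫)-invariant linear subspace 𝔯 of 𝔤 complementary to 𝔫; i.e., if 𝔯 ⊆ 𝔤 satisfies 𝔤 = 𝔯 ⊕ 𝔫 and [𝔫, 𝔯] ⊆ 𝔯, a contradiction follows. -/
open LieAlgebra LieModule

theorem no_ad_invariant_complement_of_n
    (L : Type*) [LieRing L] [LieAlgebra ℂ L] [FiniteDimensional ℂ L]
    [LieAlgebra.IsSemisimple ℂ L]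
    (H : LieSubalgebra ℂ L) [H.IsCartanSubalgebra]
    (Δplus : Set (H → ℂ))
    (hpos : ∀ α ∈ Δplus, α ≠ 0 ∧ rootSpace H α ≠ ⊥)
    (hclosed : ∀ α ∈ Δplus, ∀ β ∈ Δplus, rootSpace H (α + β) ≠ ⊥ → α + β ∈ Δplus)
    (hchoice : ∀ α : H → ℂ, α ≠ 0 → rootSpace H α ≠ ⊥ → Xor' (α ∈ Δplus) (-α ∈ Δplus))
    (hne : Δplus.Nonempty) :
    ¬ ∃ 𝔯 : Submodule ℂ L,
        IsCompl 𝔯 (⨆ α ∈ Δplus, (rootSpace H α : Submodule ℂ L)) ∧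
        ∀ X ∈ (⨆ α ∈ Δplus, (rootSpace H α : Submodule ℂ L)), ∀ Y ∈ 𝔯,
          ⁅X, Y⁆ ∈ 𝔯 := by
  rintro ⟨r, hcompl, hinv⟩
  set N : Submodule ℂ L := ⨆ α ∈ Δplus, (rootSpace H α : Submodule ℂ L) with hNdef
  obtain ⟨α, hα⟩ := hne
  obtain ⟨hα0, hαbot⟩ := hpos α hα
  obtain ⟨e, he, he0⟩ : ∃ e, e ∈ rootSpace H α ∧ e ≠ 0 := by
    by_contra h
    push_neg at h
    exact hαbot ((LieSubmodule.eq_bot_iff _).mpr h)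
  obtain ⟨h₀, hh₀⟩ : ∃ x : H, α x ≠ 0 := by
    by_contra h
    push_neg at h
    exact hα0 (funext h)
  have heN : e ∈ N := by
    have hle : (rootSpace H α : Submodule ℂ L) ≤ N :=
      le_biSup (fun χ => (rootSpace H χ : Submodule ℂ L)) hα
    exact hle ((LieSubmodule.mem_toSubmodule _).mpr he)
  have h0mem : (h₀ : L) ∈ rootSpace H (0 : H → ℂ) :=
    toLieSubmodule_le_rootSpace_zero ℂ L H (by simp [LieSubalgebra.mem_toLieSubmodule])
  -- decompose h₀ along r ⊕ N
  have htop : (h₀ : L) ∈ r ⊔ N := by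
    rw [hcompl.sup_eq_top]; trivial
  obtain ⟨rr, hrr, nn, hnn, hsum⟩ := Submodule.mem_sup.mp htop
  -- key induction : brackets with e of elements of N
  have key : ∀ y ∈ N, ⁅e, y⁆ ∈ N ∧
      ⁅e, y⁆ ∈ (⨆ (χ : H → ℂ) (_ : χ ≠ α), (genWeightSpace L χ : LieSubmodule ℂ H L)) := by
    intro y hy
    rw [hNdef, iSup_subtype'] at hy
    refine Submodule.iSup_induction _ (motive := fun z => ⁅e, z⁆ ∈ N ∧
      ⁅e, z⁆ ∈ (⨆ (χ : H → ℂ) (_ : χ ≠ α), (genWeightSpace L χ : LieSubmodule ℂ H L))) hy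
      ?_ ?_ ?_
    · rintro ⟨β, hβ⟩ x hx
      have hx' : x ∈ rootSpace H β := (LieSubmodule.mem_toSubmodule _).mp hx
      have hbr : ⁅e, x⁆ ∈ genWeightSpace L (α + β) :=
        lie_mem_genWeightSpace_of_mem_genWeightSpace he hx'
      have hβ0 : β ≠ 0 := (hpos β hβ).1
      have hne' : α + β ≠ α := fun h => hβ0 (by rwa [add_eq_left] at h)
      constructor
      · by_cases hb : rootSpace H (α + β) = ⊥
        · have hbr' : ⁅e, x⁆ ∈ rootSpace H (α + β) := hbr
          rw [hb, LieSubmodule.mem_bot] at hbr'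
          rw [hbr']; exact N.zero_mem
        · have hmem : α + β ∈ Δplus := hclosed α hα β hβ hb
          exact (le_biSup (fun χ => (rootSpace H χ : Submodule ℂ L)) hmem)
            ((LieSubmodule.mem_toSubmodule _).mpr hbr)
      · exact (le_biSup (fun χ => (genWeightSpace L χ : LieSubmodule ℂ H L)) hne') hbr
    · simp
    · rintro x y ⟨hx1, hx2⟩ ⟨hy1, hy2⟩
      rw [lie_add]
      exact ⟨add_mem hx1 hy1, add_mem hx2 hy2⟩
  obtain ⟨hnn1, hnn2⟩ := key nn hnn
  have heh : ⁅e, (h₀ : L)⁆ ∈ genWeightSpace L α := by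
    have := lie_mem_genWeightSpace_of_mem_genWeightSpace he h0mem
    rwa [add_zero] at this
  have hehN : ⁅e, (h₀ : L)⁆ ∈ N :=
    (le_biSup (fun χ => (rootSpace H χ : Submodule ℂ L)) hα)
      ((LieSubmodule.mem_toSubmodule _).mpr heh)
  have hsplit : ⁅e, (h₀ : L)⁆ = ⁅e, rr⁆ + ⁅e, nn⁆ := by rw [← hsum, lie_add]
  have hrrN : ⁅e, rr⁆ ∈ N := by
    have : ⁅e, rr⁆ = ⁅e, (h₀ : L)⁆ - ⁅e, nn⁆ := by rw [hsplit]; abel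
    rw [this]
    exact sub_mem hehN hnn1
  have hrrR : ⁅e, rr⁆ ∈ r := hinv e heN rr hrr
  have hz : ⁅e, rr⁆ = 0 :=
    (Submodule.disjoint_def.mp hcompl.disjoint) _ hrrR hrrN
  have heq : ⁅e, (h₀ : L)⁆ = ⁅e, nn⁆ := by rw [hsplit, hz, zero_add]
  have hd := (LieModule.iSupIndep_genWeightSpace ℂ H L) α
  have hbot : ⁅e, (h₀ : L)⁆ = 0 := by
    have hmem : ⁅e, (h₀ : L)⁆ ∈ (genWeightSpace L α : LieSubmodule ℂ H L) ⊓
        (⨆ (χ : H → ℂ) (_ : χ ≠ α), (genWeightSpace L χ : LieSubmodule ℂ H L)) :=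
      (LieSubmodule.mem_inf _ _ _).mpr ⟨heh, heq ▸ hnn2⟩
    rw [hd.eq_bot, LieSubmodule.mem_bot] at hmem
    exact hmem
  -- now derive the contradiction via the generalized eigenvalue
  have hz2 : LieModule.toEnd ℂ H L h₀ e = 0 := by
    rw [LieModule.toEnd_apply_apply, LieSubalgebra.coe_bracket_of_module,
      ← lie_skew, hbot, neg_zero]
  obtain ⟨k, hk⟩ := ((LieModule.mem_genWeightSpace L α e).mp he) h₀
  have hpowe : ∀ k : ℕ,
      ((LieModule.toEnd ℂ H L h₀ - α h₀ • 1) ^ k) e = (-(α h₀)) ^ k • e := by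
    intro k
    induction k with
    | zero => simp
    | succ k ih =>
      have h1 : (LieModule.toEnd ℂ H L h₀ - α h₀ • 1) e = (-(α h₀)) • e := by
        simp [hz2, neg_smul]
      rw [pow_succ', Module.End.mul_apply, ih, map_smul, h1, smul_smul, ← pow_succ]
  rw [hpowe k] at hk
  rcases smul_eq_zero.mp hk with h | h
  · exact hh₀ (neg_eq_zero.mp (pow_eq_zero_iff'.mp h).1)
  · exact he0 h
end

section
/- Let 𝔤 be a real Lie algebra, 𝔥 a subalgebra, 𝔪 a complement, σ : 𝔤 → 𝔪 the projection, extended to an algebra homomorphism σ : S(𝔤) → S(𝔪). Then for any Q ∈ S_m(𝔤) (degree ≤ m), λ(σQ − Q) ∈ λ(S_{m-1}(𝔤)) + U(𝔤)·𝔥^χ, where λ is symmetrization and 𝔥^χ = {X + χ(X) : X ∈ 𝔥^ℂ} for a character χ of 𝔥. -/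
/-!
STATEMENT 17: Let 𝔥 be a subalgebra of the Lie algebra 𝔤, 𝔪 a complement,
σ : 𝔤 → 𝔪 the projection, extended to an algebra homomorphism
σ : S(𝔤) → S(𝔪).  Then for any Q ∈ S_m(𝔤) (total degree ≤ m),
λ(σQ − Q) ∈ λ(S_{m-1}(𝔤)) + U(𝔤)·𝔥^χ,
where λ is the symmetrization map (characterized by λ(Yᵏ) = Yᵏ) and
𝔥^χ = {X + χ(X)·1 : X ∈ 𝔥} for a character χ of 𝔥.  S(𝔤) is realized as
polynomials over a basis adapted to 𝔤 = 𝔪 ⊕ 𝔥 (so that σ is the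
substitution killing the 𝔥-variables), and S_m denotes the polynomials of
total degree ≤ m.
-/

open UniversalEnvelopingAlgebra MvPolynomial

variable {L : Type*} [LieRing L] [LieAlgebra ℂ L]

attribute [local instance] LieRing.ofAssociativeRing

/-! ### Auxiliary lemmas -/

private theorem sum_pow_expand' {R : Type*} [Ring R] {n : ℕ} (S : Finset (Fin n)) (a : Fin n → R)
    (k : ℕ) :
    (∑ i ∈ S, a i) ^ k
      = ∑ f ∈ Fintype.piFinset (fun _ : Fin k => S), (List.ofFn fun t => a (f t)).prod := by
  induction k with
  | zero => simp
  | succ k ih =>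
    rw [pow_succ', ih, Finset.sum_mul_sum, ← Finset.sum_product']
    refine Finset.sum_nbij' (fun p => Fin.cons p.1 p.2) (fun g => (g 0, Fin.tail g)) ?_ ?_ ?_ ?_ ?_
    · rintro ⟨i, f⟩ hp
      simp only [Finset.mem_product, Fintype.mem_piFinset] at hp ⊢
      intro t
      refine Fin.cases ?_ ?_ t
      · simpa using hp.1
      · intro j; simpa using hp.2 j
    · intro g hg
      simp only [Fintype.mem_piFinset] at hg
      simp only [Finset.mem_product, Fintype.mem_piFinset]
      exact ⟨hg 0, fun j => hg _⟩
    · rintro ⟨i, f⟩ _; simp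
    · intro g _; simp [Fin.cons_self_tail]
    · rintro ⟨i, f⟩ _
      simp only [List.ofFn_succ, Fin.cons_zero, Fin.cons_succ, List.prod_cons]

private theorem polarization_aux {R : Type*} [Ring R] {n : ℕ} (a : Fin n → R) :
    ∑ S ∈ (Finset.univ : Finset (Fin n)).powerset,
        (-1 : ℤ) ^ (n - S.card) • (∑ i ∈ S, a i) ^ n
      = ∑ f ∈ (Finset.univ : Finset (Fin n → Fin n)).filter (fun f => Function.Bijective f),
          (List.ofFn fun t => a (f t)).prod := by
  have h1 : ∀ S : Finset (Fin n),
      Fintype.piFinset (fun _ : Fin n => S)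
        = (Finset.univ : Finset (Fin n → Fin n)).filter (fun f => ∀ t, f t ∈ S) := by
    intro S; ext f; simp [Fintype.mem_piFinset]
  have hL : ∑ S ∈ (Finset.univ : Finset (Fin n)).powerset,
        (-1 : ℤ) ^ (n - S.card) • (∑ i ∈ S, a i) ^ n
      = ∑ S ∈ (Finset.univ : Finset (Fin n)).powerset,
          ∑ f ∈ (Finset.univ : Finset (Fin n → Fin n)),
            (-1 : ℤ) ^ (n - S.card) •
              if ∀ t, f t ∈ S then (List.ofFn fun t => a (f t)).prod else 0 := by
    refine Finset.sum_congr rfl fun S _ => ?_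
    rw [sum_pow_expand', h1, Finset.sum_filter, Finset.smul_sum]
  rw [hL, Finset.sum_comm]
  have h2 : ∀ f : Fin n → Fin n,
      (∑ S ∈ (Finset.univ : Finset (Fin n)).powerset,
        (-1 : ℤ) ^ (n - S.card) • if ∀ t, f t ∈ S then (List.ofFn fun t => a (f t)).prod else 0)
      = (∑ S ∈ ((Finset.univ : Finset (Fin n)).powerset).filter
            (fun S => Finset.image f Finset.univ ⊆ S), (-1 : ℤ) ^ (n - S.card))
          • (List.ofFn fun t => a (f t)).prod := by
    intro f
    rw [Finset.sum_smul]
    rw [Finset.sum_filter]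
    refine Finset.sum_congr rfl fun S _ => ?_
    have : (∀ t, f t ∈ S) ↔ Finset.image f Finset.univ ⊆ S := by
      rw [Finset.image_subset_iff]; simp
    by_cases h : ∀ t, f t ∈ S
    · rw [if_pos h, if_pos (this.mp h)]
    · rw [if_neg h, if_neg (fun hh => h (this.mpr hh)), smul_zero]
  have h3 : ∀ f : Fin n → Fin n,
      (∑ S ∈ ((Finset.univ : Finset (Fin n)).powerset).filter
            (fun S => Finset.image f Finset.univ ⊆ S), (-1 : ℤ) ^ (n - S.card))
        = if Function.Bijective f then 1 else 0 := by
    intro f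
    set T := Finset.image f Finset.univ with hT
    have : ∀ S ∈ ((Finset.univ : Finset (Fin n)).powerset).filter (fun S => T ⊆ S),
        (-1 : ℤ) ^ (n - S.card) = (-1 : ℤ) ^ (Sᶜ.card) := by
      intro S _
      rw [Finset.card_compl, Fintype.card_fin]
    rw [Finset.sum_congr rfl this]
    rw [Finset.sum_nbij' (i := fun S => Sᶜ) (j := fun S => Sᶜ)
      (t := Tᶜ.powerset) (g := fun S => (-1 : ℤ) ^ S.card) ?_ ?_ ?_ ?_ ?_]
    · rw [Finset.sum_powerset_neg_one_pow_card]
      have hiff : Tᶜ = ∅ ↔ Function.Bijective f := by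
        rw [Finset.compl_eq_empty_iff]
        constructor
        · intro h
          have hsurj : Function.Surjective f := by
            intro x
            have : x ∈ T := by rw [h]; exact Finset.mem_univ x
            simpa [hT] using this
          exact (Fintype.bijective_iff_surjective_and_card f).mpr ⟨hsurj, rfl⟩
        · intro h
          apply Finset.eq_univ_of_forall
          intro x
          obtain ⟨y, hy⟩ := h.surjective x
          simp [hT, ← hy]
      simp only [hiff]
    · intro S hS
      simp only [Finset.mem_filter, Finset.mem_powerset] at hS
      rw [Finset.mem_powerset]
      exact Finset.compl_subset_compl.mpr hS.2
    · intro S hS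
      simp only [Finset.mem_powerset] at hS
      simp only [Finset.mem_filter, Finset.mem_powerset]
      exact ⟨Finset.subset_univ _, by rwa [← Finset.compl_subset_compl, compl_compl] ⟩
    · intro S _; exact compl_compl S
    · intro S _; exact compl_compl S
    · intro S _; rfl
  calc ∑ f ∈ (Finset.univ : Finset (Fin n → Fin n)),
        (∑ S ∈ (Finset.univ : Finset (Fin n)).powerset,
          (-1 : ℤ) ^ (n - S.card) • if ∀ t, f t ∈ S then (List.ofFn fun t => a (f t)).prod else 0)
      = ∑ f ∈ (Finset.univ : Finset (Fin n → Fin n)),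
          (if Function.Bijective f then (1:ℤ) else 0) • (List.ofFn fun t => a (f t)).prod := by
        refine Finset.sum_congr rfl fun f _ => ?_
        rw [h2 f, h3 f]
    _ = _ := by
        rw [Finset.sum_filter]
        refine Finset.sum_congr rfl fun f _ => ?_
        split_ifs <;> simp

private theorem ofFn_comp_perm {α : Type*} {n : ℕ} (g : Fin n → α) (f : Fin n → Fin n)
    (hf : Function.Bijective f) : (List.ofFn fun t => g (f t)).Perm (List.ofFn g) := by
  have h1 : (List.ofFn fun t => g (f t)) = (List.ofFn f).map g := by
    rw [List.map_ofFn]; rfl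
  have h2 : (List.ofFn g) = (List.ofFn (id : Fin n → Fin n)).map g := by
    rw [List.map_ofFn]; rfl
  rw [h1, h2]
  refine List.Perm.map g ?_
  refine List.perm_of_nodup_nodup_toFinset_eq ?_ ?_ ?_
  · exact (List.nodup_ofFn).mpr hf.injective
  · exact (List.nodup_ofFn).mpr Function.injective_id
  · ext x
    simp only [List.mem_toFinset, List.mem_ofFn]
    simpa using hf.surjective x

private theorem prod_map_X_toList {ι : Type*} (d : ι →₀ ℕ) :
    ((d.toMultiset.toList).map (MvPolynomial.X : ι → MvPolynomial ι ℂ)).prod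
      = MvPolynomial.monomial d (1:ℂ) := by
  have h1 : ((d.toMultiset.toList).map (MvPolynomial.X : ι → MvPolynomial ι ℂ)).prod
      = (d.toMultiset.map (MvPolynomial.X : ι → MvPolynomial ι ℂ)).prod := by
    rw [← Multiset.prod_coe, ← Multiset.map_coe, Multiset.coe_toList]
  rw [h1, Finsupp.toMultiset_map, Finsupp.prod_toMultiset]
  rw [Finsupp.prod_mapDomain_index (fun p => pow_zero p) (fun p n1 n2 => pow_add p n1 n2)]
  rw [MvPolynomial.monomial_eq, MvPolynomial.C_1, one_mul]

private theorem toPoly_basis {ι : Type*} (b : Module.Basis ι ℂ L) (j : ι) :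
    toPoly b (b j) = MvPolynomial.X j := by
  simp [toPoly, Finsupp.linearCombination_single]

private noncomputable def pmProj {ι₁ ι₂ : Type*} (b : Module.Basis (ι₁ ⊕ ι₂) ℂ L) : L →ₗ[ℂ] L :=
  (Finsupp.linearCombination ℂ (Sum.elim (fun i => b (Sum.inl i)) fun _ => (0:L))).comp
    b.repr.toLinearMap

private theorem sigmaS_toPoly {ι₁ ι₂ : Type*} (b : Module.Basis (ι₁ ⊕ ι₂) ℂ L) (Y : L) :
    sigmaS (toPoly b Y) = toPoly b (pmProj b Y) := by
  have : (sigmaS.toLinearMap.comp (toPoly b) : L →ₗ[ℂ] MvPolynomial (ι₁ ⊕ ι₂) ℂ)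
      = (toPoly b).comp (pmProj b) := by
    refine Module.Basis.ext b fun j => ?_
    simp only [LinearMap.comp_apply, AlgHom.toLinearMap_apply, toPoly_basis]
    have hp : pmProj b (b j) = Sum.elim (fun i => b (Sum.inl i)) (fun _ => (0:L)) j := by
      simp [pmProj, Finsupp.linearCombination_single]
    rw [hp]
    cases j with
    | inl i => simp [sigmaS, toPoly_basis]
    | inr i => simp [sigmaS]
  exact LinearMap.congr_fun this Y

private theorem sub_pmProj_mem {ι₁ ι₂ : Type*} (b : Module.Basis (ι₁ ⊕ ι₂) ℂ L)
    (𝔥 : LieSubalgebra ℂ L) (hb𝔥 : ∀ j, b (Sum.inr j) ∈ 𝔥) (Y : L) :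
    Y - pmProj b Y ∈ 𝔥 := by
  have hY : Y = (b.repr Y).sum fun i r => r • b i := by
    conv_lhs => rw [← b.linearCombination_repr Y]
    rfl
  have hp : pmProj b Y
      = (b.repr Y).sum fun i r => r • Sum.elim (fun i => b (Sum.inl i)) (fun _ => (0:L)) i := by
    rfl
  rw [hp]
  nth_rewrite 1 [hY]
  rw [← Finsupp.sum_sub]
  refine Submodule.sum_mem 𝔥.toSubmodule fun i _ => ?_
  cases i with
  | inl i => simp
  | inr i =>
    simp only [Sum.elim_inr, smul_zero, sub_zero]
    exact Submodule.smul_mem _ _ (hb𝔥 i)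

private theorem toPoly_totalDegree {ι : Type*} (b : Module.Basis ι ℂ L) (Y : L) :
    (toPoly b Y).totalDegree ≤ 1 := by
  have : toPoly b Y = (b.repr Y).sum fun i r => r • MvPolynomial.X i := rfl
  rw [this]
  refine le_trans (MvPolynomial.totalDegree_finset_sum _ _) ?_
  refine Finset.sup_le fun i _ => ?_
  refine le_trans (MvPolynomial.totalDegree_smul_le _ _) ?_
  simp [MvPolynomial.totalDegree_X]

private theorem monomial_mem_span_pow_s17 {ι₁ ι₂ : Type*} (b : Module.Basis (ι₁ ⊕ ι₂) ℂ L)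
    (m : ℕ) (d : (ι₁ ⊕ ι₂) →₀ ℕ) (hd : (d.sum fun _ e => e) ≤ m) :
    MvPolynomial.monomial d (1:ℂ) ∈
      Submodule.span ℂ {q : MvPolynomial (ι₁ ⊕ ι₂) ℂ | ∃ k ≤ m, ∃ Y : L, q = toPoly b Y ^ k} := by
  classical
  set l := d.toMultiset.toList with hl
  have hcard : l.length ≤ m := by
    rw [hl, Multiset.length_toList, Finsupp.card_toMultiset]
    exact hd
  set n := l.length with hn
  have hpol := polarization_aux (R := MvPolynomial (ι₁ ⊕ ι₂) ℂ) (n := n)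
    (fun t => MvPolynomial.X (l.get t))
  have hterm : ∀ f ∈ (Finset.univ : Finset (Fin n → Fin n)).filter (fun f => Function.Bijective f),
      (List.ofFn fun t => (MvPolynomial.X (l.get (f t)) : MvPolynomial (ι₁ ⊕ ι₂) ℂ)).prod
        = MvPolynomial.monomial d 1 := by
    intro f hf
    simp only [Finset.mem_filter] at hf
    have hperm : (List.ofFn fun t => l.get (f t)).Perm (List.ofFn l.get) :=
      ofFn_comp_perm _ _ hf.2
    have h1 : (List.ofFn fun t => (MvPolynomial.X (l.get (f t)) : MvPolynomial (ι₁ ⊕ ι₂) ℂ))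
        = (List.ofFn fun t => l.get (f t)).map MvPolynomial.X := by
      rw [List.map_ofFn]; rfl
    have h2 : ((List.ofFn fun t => l.get (f t)).map
          (MvPolynomial.X : _ → MvPolynomial (ι₁ ⊕ ι₂) ℂ)).prod
        = ((List.ofFn l.get).map (MvPolynomial.X : _ → MvPolynomial (ι₁ ⊕ ι₂) ℂ)).prod :=
      (hperm.map MvPolynomial.X).prod_eq
    rw [h1, h2, List.ofFn_get, hl]
    exact prod_map_X_toList d
  rw [Finset.sum_congr rfl hterm, Finset.sum_const] at hpol
  set N := ((Finset.univ : Finset (Fin n → Fin n)).filter (fun f => Function.Bijective f)).card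
    with hN
  have hN0 : N ≠ 0 := by
    exact Finset.card_ne_zero_of_mem
      (Finset.mem_filter.mpr ⟨Finset.mem_univ _, Function.bijective_id⟩)
  have hmem : (∑ S ∈ (Finset.univ : Finset (Fin n)).powerset,
      (-1 : ℤ) ^ (n - S.card) • (∑ i ∈ S, (MvPolynomial.X (l.get i) : MvPolynomial _ ℂ)) ^ n)
      ∈ Submodule.span ℂ {q : MvPolynomial (ι₁ ⊕ ι₂) ℂ | ∃ k ≤ m, ∃ Y : L, q = toPoly b Y ^ k} := by
    refine Submodule.sum_mem _ fun S _ => zsmul_mem ?_ _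
    refine Submodule.subset_span ?_
    refine ⟨n, hcard, ∑ i ∈ S, b (l.get i), ?_⟩
    congr 1
    rw [map_sum]
    exact Finset.sum_congr rfl fun i _ => (toPoly_basis b (l.get i)).symm
  rw [hpol] at hmem
  have : MvPolynomial.monomial d (1:ℂ) = (N : ℂ)⁻¹ • (N • (MvPolynomial.monomial d (1:ℂ))) := by
    rw [← Nat.cast_smul_eq_nsmul ℂ, smul_smul, inv_mul_cancel₀ (by exact_mod_cast hN0), one_smul]
  rw [this]
  exact Submodule.smul_mem _ _ hmem

private noncomputable def Wspan (L : Type*) [LieRing L] [LieAlgebra ℂ L] (j : ℕ) :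
    Submodule ℂ (UniversalEnvelopingAlgebra ℂ L) :=
  Submodule.span ℂ {u | ∃ l : List L, l.length ≤ j ∧ u = (l.map (ι ℂ)).prod}

private theorem prod_mem_Wspan {j : ℕ} (l : List L) (hl : l.length ≤ j) :
    (l.map (ι ℂ)).prod ∈ Wspan L j :=
  Submodule.subset_span ⟨l, hl, rfl⟩

private theorem Wspan_mono {j j' : ℕ} (h : j ≤ j') : Wspan L j ≤ Wspan L j' :=
  Submodule.span_mono fun _ => fun ⟨l, hl, hu⟩ => ⟨l, hl.trans h, hu⟩

private theorem mul_Wspan {j : ℕ} (Z : L) {x : UniversalEnvelopingAlgebra ℂ L}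
    (hx : x ∈ Wspan L j) : ι ℂ Z * x ∈ Wspan L (j + 1) := by
  induction hx using Submodule.span_induction with
  | mem u hu =>
    obtain ⟨l, hl, rfl⟩ := hu
    have : ι ℂ Z * (l.map (ι ℂ)).prod = ((Z :: l).map (ι ℂ)).prod := by simp
    rw [this]
    exact prod_mem_Wspan _ (by simpa using Nat.succ_le_succ hl)
  | zero => rw [mul_zero]; exact Submodule.zero_mem _
  | add x y _ _ hx hy => rw [mul_add]; exact Submodule.add_mem _ hx hy
  | smul c x _ hx => rw [mul_smul_comm]; exact Submodule.smul_mem _ _ hx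

private theorem perm_diff {l₁ l₂ : List L} (h : l₁.Perm l₂) :
    ∀ n : ℕ, l₁.length ≤ n + 1 →
      (l₁.map (ι ℂ)).prod - (l₂.map (ι ℂ)).prod ∈ Wspan L n := by
  induction h with
  | nil => intro n _; simp [Submodule.zero_mem]
  | @cons a l₁ l₂ h ih =>
    intro n hn
    match n with
    | 0 =>
      have h0 : l₁ = [] := List.length_eq_zero_iff.mp (by simpa using hn)
      subst h0
      have h2 : l₂ = [] := List.Perm.eq_nil h.symm
      subst h2
      rw [sub_self]
      exact Submodule.zero_mem _
    | Nat.succ n' =>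
      rw [List.map_cons, List.map_cons, List.prod_cons, List.prod_cons, ← mul_sub]
      exact Wspan_mono (le_refl _) (mul_Wspan a (ih n' (by simpa using hn)))
  | swap x y l =>
    intro n hn
    rw [List.map_cons, List.map_cons, List.map_cons, List.map_cons,
      List.prod_cons, List.prod_cons, List.prod_cons, List.prod_cons,
      ← mul_assoc, ← mul_assoc, ← sub_mul]
    have hlie : ι ℂ y * ι ℂ x - ι ℂ x * ι ℂ y = ι ℂ ⁅y, x⁆ := by
      rw [LieHom.map_lie]; rw [Ring.lie_def]
    rw [hlie]
    have : ι ℂ ⁅y, x⁆ * (l.map (ι ℂ)).prod = ((⁅y, x⁆ :: l).map (ι ℂ)).prod := by simp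
    rw [this]
    refine prod_mem_Wspan _ ?_
    simp only [List.length_cons] at hn ⊢
    omega
  | @trans l₁ l₂ l₃ h₁ h₂ ih₁ ih₂ =>
    intro n hn
    have hlen := h₁.length_eq
    have hmem := Submodule.add_mem _ (ih₁ n hn) (ih₂ n (by omega))
    rw [sub_add_sub_cancel] at hmem
    exact hmem

private theorem restrictTotalDegree_mono {ι : Type*} {j j' : ℕ} (h : j ≤ j') :
    restrictTotalDegree ι ℂ j ≤ restrictTotalDegree ι ℂ j' := by
  intro p hp
  rw [mem_restrictTotalDegree] at hp ⊢
  exact hp.trans h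

private theorem Wspan_le {ι₁ ι₂ : Type*} (b : Module.Basis (ι₁ ⊕ ι₂) ℂ L)
    (lam : MvPolynomial (ι₁ ⊕ ι₂) ℂ →ₗ[ℂ] UniversalEnvelopingAlgebra ℂ L)
    (hlam : ∀ (Y : L) (k : ℕ), lam (toPoly b Y ^ k) = (ι ℂ Y) ^ k) :
    ∀ k, Wspan L k ≤ Submodule.map lam (restrictTotalDegree (ι₁ ⊕ ι₂) ℂ k) := by
  intro k
  induction k with
  | zero =>
    rw [Wspan, Submodule.span_le]
    rintro u ⟨l, hl, rfl⟩
    have : l = [] := List.length_eq_zero_iff.mp (Nat.le_zero.mp hl)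
    subst this
    refine ⟨1, ?_, ?_⟩
    · rw [SetLike.mem_coe, mem_restrictTotalDegree, MvPolynomial.totalDegree_one]
    · have := hlam 0 0
      simpa using this
  | succ k ih =>
    rw [Wspan, Submodule.span_le]
    rintro u ⟨l, hl, rfl⟩
    rcases Nat.lt_or_ge l.length (k+1) with hlt | hge
    · exact Submodule.map_mono (restrictTotalDegree_mono (Nat.le_succ k))
        (ih (prod_mem_Wspan l (Nat.lt_succ_iff.mp hlt)))
    have hlen : l.length = k + 1 := le_antisymm hl hge
    have hpol := polarization_aux (R := UniversalEnvelopingAlgebra ℂ L)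
      (n := l.length) (fun t => ι ℂ (l.get t))
    set q : MvPolynomial (ι₁ ⊕ ι₂) ℂ :=
      ∑ S ∈ (Finset.univ : Finset (Fin l.length)).powerset,
        (-1 : ℤ) ^ (l.length - S.card) • (toPoly b (∑ i ∈ S, l.get i)) ^ l.length with hq
    have hq1 : lam q = ∑ S ∈ (Finset.univ : Finset (Fin l.length)).powerset,
        (-1 : ℤ) ^ (l.length - S.card) • (∑ i ∈ S, ι ℂ (l.get i)) ^ l.length := by
      rw [hq, map_sum]
      refine Finset.sum_congr rfl fun S _ => ?_
      have hsum : ι ℂ (∑ i ∈ S, l.get i) = ∑ i ∈ S, ι ℂ (l.get i) := by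
        rw [← LieHom.coe_toLinearMap]
        exact map_sum _ _ _
      rw [map_zsmul, hlam, hsum]
    have hq2 : q ∈ restrictTotalDegree (ι₁ ⊕ ι₂) ℂ (k+1) := by
      refine Submodule.sum_mem _ fun S _ => zsmul_mem ?_ _
      rw [mem_restrictTotalDegree]
      refine le_trans (MvPolynomial.totalDegree_pow _ _) ?_
      have := toPoly_totalDegree b (∑ i ∈ S, l.get i)
      calc l.length * (toPoly b (∑ i ∈ S, l.get i)).totalDegree
          ≤ l.length * 1 := Nat.mul_le_mul_left _ this
        _ = k + 1 := by rw [Nat.mul_one, hlen]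
    set Bij := (Finset.univ : Finset (Fin l.length → Fin l.length)).filter
      (fun f => Function.Bijective f) with hBij
    have hterm : ∀ f ∈ Bij,
        (List.ofFn fun t => ι ℂ (l.get (f t))).prod
          - (l.map (ι ℂ)).prod ∈ Wspan L k := by
      intro f hf
      rw [hBij, Finset.mem_filter] at hf
      have hperm : (List.ofFn fun t => l.get (f t)).Perm l := by
        have := ofFn_comp_perm l.get f hf.2
        rwa [List.ofFn_get] at this
      have h1 : (List.ofFn fun t => ι ℂ (l.get (f t)))
          = (List.ofFn fun t => l.get (f t)).map (ι ℂ) := by rw [List.map_ofFn]; rfl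
      rw [h1]
      refine perm_diff hperm k ?_
      simp [hlen]
    have hw : (∑ f ∈ Bij, ((List.ofFn fun t => ι ℂ (l.get (f t))).prod
        - (l.map (ι ℂ)).prod)) ∈ Wspan L k :=
      Submodule.sum_mem _ hterm
    have hsplit : ∑ f ∈ Bij, (List.ofFn fun t => ι ℂ (l.get (f t))).prod
        = (∑ f ∈ Bij, ((List.ofFn fun t => ι ℂ (l.get (f t))).prod - (l.map (ι ℂ)).prod))
          + Bij.card • (l.map (ι ℂ)).prod := by
      rw [Finset.sum_sub_distrib, Finset.sum_const, sub_add_cancel]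
    have hNpos : (Bij.card : ℂ) ≠ 0 := by
      have : Bij.card ≠ 0 := Finset.card_ne_zero_of_mem
        (Finset.mem_filter.mpr ⟨Finset.mem_univ _, Function.bijective_id⟩)
      exact_mod_cast this
    have hWk : Wspan L k ≤ Submodule.map lam (restrictTotalDegree (ι₁ ⊕ ι₂) ℂ (k+1)) :=
      le_trans ih (Submodule.map_mono (restrictTotalDegree_mono (Nat.le_succ k)))
    have hprod : (l.map (ι ℂ)).prod
        = (Bij.card : ℂ)⁻¹ • (lam q - (∑ f ∈ Bij, ((List.ofFn fun t => ι ℂ (l.get (f t))).prod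
            - (l.map (ι ℂ)).prod))) := by
      rw [hq1, hpol, hsplit]
      rw [add_sub_cancel_left]
      rw [← Nat.cast_smul_eq_nsmul ℂ, smul_smul, inv_mul_cancel₀ hNpos, one_smul]
    rw [hprod]
    refine Submodule.smul_mem _ _ ?_
    refine Submodule.sub_mem _ ?_ (hWk hw)
    exact ⟨q, hq2, rfl⟩

private theorem mul_leftIdeal (𝔥 : LieSubalgebra ℂ L) (χ : L →ₗ[ℂ] ℂ)
    (u : UniversalEnvelopingAlgebra ℂ L) {x : UniversalEnvelopingAlgebra ℂ L}
    (hx : x ∈ leftIdealHChi 𝔥 χ) : u * x ∈ leftIdealHChi 𝔥 χ := by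
  induction hx using Submodule.span_induction with
  | mem w hw =>
    obtain ⟨v, X, hX, rfl⟩ := hw
    rw [← mul_assoc]
    exact Submodule.subset_span ⟨u * v, X, hX, rfl⟩
  | zero => rw [mul_zero]; exact Submodule.zero_mem _
  | add x y _ _ hx hy => rw [mul_add]; exact Submodule.add_mem _ hx hy
  | smul c x _ hx => rw [mul_smul_comm]; exact Submodule.smul_mem _ _ hx

private theorem move_h (𝔥 : LieSubalgebra ℂ L) (χ : L →ₗ[ℂ] ℂ) :
    ∀ (r : ℕ) (Z : L), Z ∈ 𝔥 → ∀ Ym : L,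
      ι ℂ Z * (ι ℂ Ym) ^ r ∈ Wspan L r ⊔ leftIdealHChi 𝔥 χ := by
  intro r
  induction r with
  | zero =>
    intro Z hZ Ym
    rw [pow_zero, mul_one]
    have h1 : ι ℂ Z = (ι ℂ Z + algebraMap ℂ (UniversalEnvelopingAlgebra ℂ L) (χ Z))
        - (χ Z) • (1 : UniversalEnvelopingAlgebra ℂ L) := by
      rw [Algebra.algebraMap_eq_smul_one, add_sub_cancel_right]
    rw [h1]
    refine Submodule.sub_mem _ ?_ ?_
    · exact Submodule.mem_sup_right (Submodule.subset_span ⟨1, Z, hZ, (one_mul _).symm⟩)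
    · refine Submodule.mem_sup_left (Submodule.smul_mem _ _ ?_)
      have : ((([] : List L)).map (ι ℂ)).prod = (1 : UniversalEnvelopingAlgebra ℂ L) := rfl
      exact this ▸ prod_mem_Wspan [] (by simp)
  | succ r ih =>
    intro Z hZ Ym
    have hcomm : ι ℂ Z * ι ℂ Ym = ι ℂ Ym * ι ℂ Z + ι ℂ ⁅Z, Ym⁆ := by
      rw [LieHom.map_lie, Ring.lie_def]; abel
    have hsplit : ι ℂ Z * (ι ℂ Ym) ^ (r+1)
        = ι ℂ Ym * (ι ℂ Z * (ι ℂ Ym) ^ r) + ι ℂ ⁅Z, Ym⁆ * (ι ℂ Ym) ^ r := by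
      rw [pow_succ', ← mul_assoc, hcomm, add_mul, mul_assoc]
    rw [hsplit]
    refine Submodule.add_mem _ ?_ ?_
    · obtain ⟨w, hw, i, hi, hdec⟩ := Submodule.mem_sup.mp (ih Z hZ Ym)
      rw [← hdec, mul_add]
      refine Submodule.add_mem _ ?_ ?_
      · exact Submodule.mem_sup_left (mul_Wspan Ym hw)
      · exact Submodule.mem_sup_right (mul_leftIdeal 𝔥 χ _ hi)
    · refine Submodule.mem_sup_left ?_
      have hlist : ι ℂ ⁅Z, Ym⁆ * (ι ℂ Ym) ^ r
          = ((⁅Z, Ym⁆ :: List.replicate r Ym).map (ι ℂ)).prod := by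
        simp [List.map_replicate, List.prod_replicate]
      rw [hlist]
      exact prod_mem_Wspan _ (by simp)

private theorem key_pow (𝔥 : LieSubalgebra ℂ L) (χ : L →ₗ[ℂ] ℂ) :
    ∀ (k : ℕ) (Ym Yh : L), Yh ∈ 𝔥 →
      (ι ℂ (Ym + Yh)) ^ (k+1) - (ι ℂ Ym) ^ (k+1) ∈ Wspan L k ⊔ leftIdealHChi 𝔥 χ := by
  intro k
  induction k with
  | zero =>
    intro Ym Yh hYh
    rw [pow_one, pow_one, map_add, add_sub_cancel_left]
    have := move_h 𝔥 χ 0 Yh hYh Ym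
    rwa [pow_zero, mul_one] at this
  | succ k ih =>
    intro Ym Yh hYh
    have hsplit : (ι ℂ (Ym + Yh)) ^ (k+2) - (ι ℂ Ym) ^ (k+2)
        = ι ℂ (Ym + Yh) * ((ι ℂ (Ym + Yh)) ^ (k+1) - (ι ℂ Ym) ^ (k+1))
          + ι ℂ Yh * (ι ℂ Ym) ^ (k+1) := by
      rw [map_add, mul_sub, ← pow_succ', add_mul, ← pow_succ']
      abel
    rw [hsplit]
    refine Submodule.add_mem _ ?_ (move_h 𝔥 χ (k+1) Yh hYh Ym)
    obtain ⟨w, hw, i, hi, hdec⟩ := Submodule.mem_sup.mp (ih Ym Yh hYh)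
    rw [← hdec, mul_add]
    refine Submodule.add_mem _ ?_ ?_
    · exact Submodule.mem_sup_left (mul_Wspan _ hw)
    · exact Submodule.mem_sup_right (mul_leftIdeal 𝔥 χ _ hi)

theorem lam_sigma_sub_self_mem
    (L : Type*) [LieRing L] [LieAlgebra ℂ L] [Module.Finite ℂ L]
    (𝔥 : LieSubalgebra ℂ L) (𝔪 : Submodule ℂ L) (h𝔪 : IsCompl 𝔪 𝔥.toSubmodule)
    (χ : L →ₗ[ℂ] ℂ) (hχchar : ∀ X ∈ 𝔥, ∀ Y ∈ 𝔥, χ ⁅X, Y⁆ = 0)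
    -- a basis of 𝔤 adapted to the decomposition 𝔤 = 𝔪 ⊕ 𝔥
    (ι₁ ι₂ : Type*) (b : Module.Basis (ι₁ ⊕ ι₂) ℂ L)
    (hb𝔪 : ∀ i, b (Sum.inl i) ∈ 𝔪) (hb𝔥 : ∀ j, b (Sum.inr j) ∈ 𝔥)
    -- the symmetrization map λ : S(𝔤) → U(𝔤)
    (lam : MvPolynomial (ι₁ ⊕ ι₂) ℂ →ₗ[ℂ] UniversalEnvelopingAlgebra ℂ L)
    (hlam : ∀ (Y : L) (k : ℕ), lam (toPoly b Y ^ k) = (ι ℂ Y) ^ k)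
    (m : ℕ) (Q : MvPolynomial (ι₁ ⊕ ι₂) ℂ)
    (hQ : Q ∈ MvPolynomial.restrictTotalDegree (ι₁ ⊕ ι₂) ℂ m) :
    lam (sigmaS Q - Q) ∈
      Submodule.map lam (MvPolynomial.restrictTotalDegree (ι₁ ⊕ ι₂) ℂ (m - 1)) ⊔
        leftIdealHChi 𝔥 χ := by
  classical
  -- Step 1: Q lies in the span of powers of linear forms of degree ≤ m.
  have hQspan : Q ∈ Submodule.span ℂ
      {q : MvPolynomial (ι₁ ⊕ ι₂) ℂ | ∃ k ≤ m, ∃ Y : L, q = toPoly b Y ^ k} := by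
    rw [← Q.support_sum_monomial_coeff]
    refine Submodule.sum_mem _ fun d hd => ?_
    have hdeg : (d.sum fun _ e => e) ≤ m :=
      le_trans (MvPolynomial.le_totalDegree hd) ((mem_restrictTotalDegree _ _ _).mp hQ)
    have hmono : (MvPolynomial.monomial d (MvPolynomial.coeff d Q))
        = (MvPolynomial.coeff d Q) • MvPolynomial.monomial d (1:ℂ) := by
      rw [MvPolynomial.smul_monomial, smul_eq_mul, mul_one]
    rw [hmono]
    exact Submodule.smul_mem _ _ (monomial_mem_span_pow_s17 b m d hdeg)
  -- Step 2: reduce to generators.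
  set T := Submodule.map lam (MvPolynomial.restrictTotalDegree (ι₁ ⊕ ι₂) ℂ (m - 1)) ⊔
    leftIdealHChi 𝔥 χ with hT
  have hgen : Submodule.span ℂ
      {q : MvPolynomial (ι₁ ⊕ ι₂) ℂ | ∃ k ≤ m, ∃ Y : L, q = toPoly b Y ^ k}
      ≤ T.comap (lam ∘ₗ ((sigmaS : MvPolynomial (ι₁ ⊕ ι₂) ℂ →ₐ[ℂ] _).toLinearMap
          - LinearMap.id)) := by
    rw [Submodule.span_le]
    rintro q ⟨k, hk, Y, rfl⟩
    simp only [SetLike.mem_coe, Submodule.mem_comap, LinearMap.comp_apply, LinearMap.sub_apply,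
      AlgHom.toLinearMap_apply, LinearMap.id_apply]
    have hs : sigmaS (toPoly b Y ^ k) = (toPoly b (pmProj b Y)) ^ k := by
      rw [map_pow, sigmaS_toPoly]
    rw [map_sub, hs, hlam, hlam]
    -- now show (ι (pmProj b Y))^k - (ι Y)^k ∈ T
    match k, hk with
    | 0, _ => rw [pow_zero, pow_zero, sub_self]; exact Submodule.zero_mem _
    | (k' + 1), hk =>
      have hYh : Y - pmProj b Y ∈ 𝔥 := sub_pmProj_mem b 𝔥 hb𝔥 Y
      have hkey := key_pow 𝔥 χ k' (pmProj b Y) (Y - pmProj b Y) hYh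
      rw [add_sub_cancel] at hkey
      have hle : Wspan L k' ⊔ leftIdealHChi 𝔥 χ ≤ T := by
        rw [hT]
        refine sup_le_sup ?_ (le_refl _)
        refine le_trans (Wspan_mono (by omega)) (Wspan_le b lam hlam (m - 1))
      have := hle hkey
      have hneg : (ι ℂ (pmProj b Y)) ^ (k' + 1) - (ι ℂ Y) ^ (k' + 1)
          = -((ι ℂ Y) ^ (k' + 1) - (ι ℂ (pmProj b Y)) ^ (k' + 1)) := (neg_sub _ _).symm
      rw [hneg]
      exact Submodule.neg_mem _ this
  exact hgen hQspan
end
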